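/- arXiv:1904.04527 — 10 statements merged into one kernel-verified Lean document; each statement's English description precedes it below -/
import Mathlib

section
/- Let A be a closed linear sublattice of C_b(X) (closed under pointwise maximum and minimum). Then the following conditions are equivalent: (A2) for every closed set F ⊆ X and every x ∈ X∖F there exists g ∈ A with g(x) = 1 and g = 0 on F; (A3) for every nonnegative f ∈ C_b(X) and every x ∈ X, f(x) = sup{ g(x) : g ∈ A, 0 ≤ g ≤ f }; (A4) for every nonnegative f ∈ C_b(X) there exists a sequence (g_j) of nonnegative elements of A with g_j increasing pointwise to f; (A5) the sets {x ∈ X : g(x) > 0}, g ∈ A, form a base of the topology of X. -/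
open MeasureTheory Filter Topology BoundedContinuousFunction ENNReal NNReal

noncomputable section

namespace AMPaper

variable (X : Type*) [TopologicalSpace X] [MeasurableSpace X]

/-- The topology `τ_b` on the space of finite nonnegative Borel measures:
the weak topology induced by the pairings `μ ↦ ∫ g dμ`, `g ∈ C_b(X)`. -/
def taub : TopologicalSpace (FiniteMeasure X) :=
  ⨅ g : X →ᵇ ℝ,
    TopologicalSpace.induced (fun μ : FiniteMeasure X => ∫ x, g x ∂(μ : Measure X)) inferInstance

/-- The topology `τ_A` induced by the pairings with functions from `A ⊆ C_b(X)`. -/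
def tauA (A : Set (X →ᵇ ℝ)) : TopologicalSpace (FiniteMeasure X) :=
  ⨅ g ∈ A,
    TopologicalSpace.induced (fun μ : FiniteMeasure X => ∫ x, g x ∂(μ : Measure X)) inferInstance

variable {X}

/-- A closed linear sublattice of `C_b(X)`. -/
structure IsClosedSublattice (A : Set (X →ᵇ ℝ)) : Prop where
  isClosed : IsClosed A
  zero_mem : (0 : X →ᵇ ℝ) ∈ A
  add_mem : ∀ ⦃f g : X →ᵇ ℝ⦄, f ∈ A → g ∈ A → f + g ∈ A
  smul_mem : ∀ (c : ℝ) ⦃f : X →ᵇ ℝ⦄, f ∈ A → c • f ∈ A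
  sup_mem : ∀ ⦃f g h : X →ᵇ ℝ⦄, f ∈ A → g ∈ A → (∀ x, h x = max (f x) (g x)) → h ∈ A
  inf_mem : ∀ ⦃f g h : X →ᵇ ℝ⦄, f ∈ A → g ∈ A → (∀ x, h x = min (f x) (g x)) → h ∈ A

/-- An acceptable subspace of `C_b(X)`: a closed linear sublattice satisfying
the separation property (A2). -/
structure IsAcceptable (A : Set (X →ᵇ ℝ)) extends IsClosedSublattice A : Prop where
  sep : ∀ F : Set X, IsClosed F → ∀ x ∉ F, ∃ g ∈ A,
    (∀ y, 0 ≤ g y) ∧ (∀ y, g y ≤ 1) ∧ g x = 1 ∧ ∀ y ∈ F, g y = 0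

/-- A lower semicontinuous `ρ : X → [0,∞]` is admissible for `E` if `∫ ρ dμ ≥ 1` for all `μ ∈ E`. -/
def AdmissibleFun (ρ : X → ℝ≥0∞) (E : Set (FiniteMeasure X)) : Prop :=
  LowerSemicontinuous ρ ∧ ∀ μ ∈ E, 1 ≤ ∫⁻ x, ρ x ∂(μ : Measure X)

/-- The `M_p` modulus of a family of measures. -/
def Mmod (p : ℝ) (m : Measure X) (E : Set (FiniteMeasure X)) : ℝ≥0∞ :=
  ⨅ (ρ : X → ℝ≥0∞) (_ : AdmissibleFun ρ E), ∫⁻ x, ρ x ^ p ∂m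

/-- The continuous modulus `M_{p,c}^A`, with test functions nonnegative elements of `A`. -/
def McMod (p : ℝ) (A : Set (X →ᵇ ℝ)) (m : Measure X) (E : Set (FiniteMeasure X)) : ℝ≥0∞ :=
  ⨅ (g : X →ᵇ ℝ) (_ : g ∈ A ∧ (∀ x, 0 ≤ g x) ∧
      ∀ μ ∈ E, 1 ≤ ∫⁻ x, ENNReal.ofReal (g x) ∂(μ : Measure X)),
    ∫⁻ x, ENNReal.ofReal (g x) ^ p ∂m

/-- A sequence of lower semicontinuous functions `ρ_j : X → [0,∞]` is an admissible sequence
for `E` if `liminf_j ∫ ρ_j dμ ≥ 1` for all `μ ∈ E`. -/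
def AdmissibleSeq (ρ : ℕ → X → ℝ≥0∞) (E : Set (FiniteMeasure X)) : Prop :=
  (∀ j, LowerSemicontinuous (ρ j)) ∧
    ∀ μ ∈ E, 1 ≤ Filter.liminf (fun j => ∫⁻ x, ρ j x ∂(μ : Measure X)) Filter.atTop

/-- The approximation modulus `AM_p` of a family of measures. -/
def AMmod (p : ℝ) (m : Measure X) (E : Set (FiniteMeasure X)) : ℝ≥0∞ :=
  ⨅ (ρ : ℕ → X → ℝ≥0∞) (_ : AdmissibleSeq ρ E),
    Filter.liminf (fun j => ∫⁻ x, ρ j x ^ p ∂m) Filter.atTop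

/-- The continuous approximation modulus `AM_{p,c}^A`. -/
def AMcMod (p : ℝ) (A : Set (X →ᵇ ℝ)) (m : Measure X) (E : Set (FiniteMeasure X)) : ℝ≥0∞ :=
  ⨅ (g : ℕ → X →ᵇ ℝ) (_ : (∀ j, g j ∈ A ∧ ∀ x, 0 ≤ g j x) ∧
      ∀ μ ∈ E, 1 ≤ Filter.liminf
        (fun j => ∫⁻ x, ENNReal.ofReal (g j x) ∂(μ : Measure X)) Filter.atTop),
    Filter.liminf (fun j => ∫⁻ x, ENNReal.ofReal (g j x) ^ p ∂m) Filter.atTop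

/-- The `L^q(m)`-norm of a function `f : X → [0,∞]`. -/
def lqNorm (q : ℝ≥0∞) (m : Measure X) (f : X → ℝ≥0∞) : ℝ≥0∞ :=
  if q = ∞ then essSup f m else (∫⁻ x, f x ^ q.toReal ∂m) ^ (1 / q.toReal)

variable (X) in
/-- The `p`-content (depending on `p` only through the conjugate exponent `q`):
the supremum of the outer measures `η*(E)` over all plans `η` — finite Borel measures on
`(M^+(X), τ_b)` — whose barycenter `η^#` is absolutely continuous w.r.t. `m` with density
of `L^q(m)`-norm at most `1`. -/
def Ct (q : ℝ≥0∞) (m : Measure X) (E : Set (FiniteMeasure X)) : ℝ≥0∞ :=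
  ⨆ (η : @Measure (FiniteMeasure X) (@borel (FiniteMeasure X) (taub X)))
    (_ : η Set.univ < ∞ ∧ ∃ f : X → ℝ≥0∞, Measurable f ∧
      (∀ B : Set X, MeasurableSet B → (∫⁻ μ, (μ : Measure X) B ∂η) = ∫⁻ x in B, f x ∂m) ∧
      lqNorm q m f ≤ 1),
    η E


/-!
(A2) and (A5) are equivalent because an element of `A` that is positive at `x` and nonpositive
on `F` can be normalised, after taking its positive part, to one equal to `1` at `x` and `0` on
`F`. For (A2) ⇒ (A3), a bump of `A` with height slightly above `1`, vanishing where `f ≤ c` for a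
level `c` just below `f x`, is scaled to lie below `f` and almost reach `f x`. For (A3) ⇒ (A4),
on a second countable space the pointwise supremum `f` of the continuous family
`{g ∈ A | 0 ≤ g ≤ f}` is already attained by a countable subfamily, whose partial maxima form the
sequence. For (A4) ⇒ (A2), approximate a Urysohn function of `{x}` and `F` from below.
-/

section Sublattice

variable {Y : Type*} [TopologicalSpace Y] {A : Set (Y →ᵇ ℝ)}

lemma BoundedContinuousFunction.exists_seq_mem_isLUB [HereditarilyLindelofSpace Y]
    {S : Set (Y →ᵇ ℝ)} (hS : S.Nonempty) {f : Y → ℝ}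
    (hf : ∀ x, IsLUB ((fun g : Y →ᵇ ℝ => g x) '' S) (f x)) :
    ∃ v : ℕ → Y →ᵇ ℝ, (∀ k, v k ∈ S) ∧ ∀ x, IsLUB (Set.range fun k => v k x) (f x) := by
  obtain ⟨𝓕, h𝓕S, h𝓕c, h𝓕⟩ := exists_countable_lowerSemicontinuous_isLUB
    (𝓕 := (⇑) '' S) (by rintro _ ⟨g, -, rfl⟩; exact g.continuous.lowerSemicontinuous)
    (isLUB_pi.2 fun x => by simpa [Set.image_image] using hf x)
  obtain ⟨g₀, hg₀⟩ := hS
  obtain ⟨v, hv⟩ := (((h𝓕c.preimage DFunLike.coe_injective).mono Set.inter_subset_right).insert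
    g₀).exists_eq_range (Set.insert_nonempty g₀ (S ∩ (⇑) ⁻¹' 𝓕))
  have hvS : ∀ k, v k ∈ S := fun k => by
    obtain rfl | ⟨hS, -⟩ : v k ∈ insert g₀ (S ∩ (⇑) ⁻¹' 𝓕) := hv ▸ ⟨k, rfl⟩
    exacts [hg₀, hS]
  refine ⟨v, hvS, fun x => ⟨?_, fun b hb => (isLUB_pi.1 h𝓕 x).2 ?_⟩⟩
  · rintro _ ⟨k, rfl⟩
    exact (hf x).1 ⟨v k, hvS k, rfl⟩
  · rintro _ ⟨_, hφ, rfl⟩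
    obtain ⟨g, hgS, rfl⟩ := h𝓕S hφ
    obtain ⟨k, rfl⟩ : g ∈ Set.range v := hv ▸ Or.inr ⟨hgS, hφ⟩
    exact hb ⟨k, rfl⟩

namespace IsClosedSublattice

lemma sup_mem' (hA : IsClosedSublattice A) {f g : Y →ᵇ ℝ} (hf : f ∈ A) (hg : g ∈ A) :
    f ⊔ g ∈ A :=
  hA.sup_mem hf hg fun _ => rfl

lemma inf_mem' (hA : IsClosedSublattice A) {f g : Y →ᵇ ℝ} (hf : f ∈ A) (hg : g ∈ A) :
    f ⊓ g ∈ A :=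
  hA.inf_mem hf hg fun _ => rfl

lemma partialSups_mem (hA : IsClosedSublattice A) {v : ℕ → Y →ᵇ ℝ} (hv : ∀ k, v k ∈ A)
    (n : ℕ) : partialSups v n ∈ A := by
  induction n with
  | zero => simpa using hv 0
  | succ n ih => simpa [partialSups_succ] using hA.sup_mem' ih (hv (n + 1))

lemma exists_eq_one_eq_zero_of_pos (hA : IsClosedSublattice A) {g : Y →ᵇ ℝ} (hg : g ∈ A)
    {x : Y} (hx : 0 < g x) {F : Set Y} (hF : ∀ y ∈ F, g y ≤ 0) :
    ∃ h ∈ A, h x = 1 ∧ ∀ y ∈ F, h y = 0 :=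
  ⟨(g x)⁻¹ • (g ⊔ 0), hA.smul_mem _ (hA.sup_mem' hg hA.zero_mem),
    by simp [hx.le, hx.ne'], fun y hy => by simp [hF y hy]⟩

lemma exists_nonneg_of_separates (hA : IsClosedSublattice A)
    (hsep : ∀ F : Set Y, IsClosed F → ∀ x ∉ F, ∃ g ∈ A, g x = 1 ∧ ∀ y ∈ F, g y = 0)
    {F : Set Y} (hF : IsClosed F) {x : Y} (hx : x ∉ F) :
    ∃ g ∈ A, (∀ y, 0 ≤ g y) ∧ g x = 1 ∧ ∀ y ∈ F, g y = 0 := by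
  obtain ⟨g, hgA, hgx, hgF⟩ := hsep F hF x hx
  exact ⟨g ⊔ 0, hA.sup_mem' hgA hA.zero_mem, fun y => le_sup_right,
    by simp [hgx], fun y hy => by simp [hgF y hy]⟩

/-- Constants need not lie in `A`, so `g` cannot simply be truncated at `1`; instead `g` is cut
down by a multiple of a second function vanishing where `g ≥ M`. -/
lemma exists_bump_le_of_separates (hA : IsClosedSublattice A)
    (hsep : ∀ F : Set Y, IsClosed F → ∀ x ∉ F, ∃ g ∈ A, g x = 1 ∧ ∀ y ∈ F, g y = 0)
    {F : Set Y} (hF : IsClosed F) {x : Y} (hx : x ∉ F) {M : ℝ} (hM : 1 < M) :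
    ∃ h ∈ A, (∀ y, 0 ≤ h y ∧ h y ≤ M) ∧ h x = 1 ∧ ∀ y ∈ F, h y = 0 := by
  obtain ⟨g, hgA, hg0, hgx, hgF⟩ := hA.exists_nonneg_of_separates hsep hF hx
  obtain ⟨k, hkA, hk0, hkx, hkK⟩ := hA.exists_nonneg_of_separates hsep
    (isClosed_le continuous_const g.continuous) (show x ∉ {y | M ≤ g y} by simp [hgx, hM])
  have hM0 : 0 ≤ M := zero_le_one.trans hM.le
  refine ⟨g ⊓ M • k, hA.inf_mem' hgA (hA.smul_mem M hkA), fun y => ⟨?_, ?_⟩,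
    by simp [hgx, hkx, hM.le], fun y hy => by simpa [hgF y hy] using mul_nonneg hM0 (hk0 y)⟩
  · simpa using ⟨hg0 y, mul_nonneg hM0 (hk0 y)⟩
  · by_cases hy : M ≤ g y
    · simp [hkK y hy, hM0]
    · simp [(not_le.1 hy).le]

lemma exists_le_lt_of_separates (hA : IsClosedSublattice A)
    (hsep : ∀ F : Set Y, IsClosed F → ∀ x ∉ F, ∃ g ∈ A, g x = 1 ∧ ∀ y ∈ F, g y = 0)
    {f : Y →ᵇ ℝ} (hf : ∀ y, 0 ≤ f y) {x : Y} {r : ℝ} (hr : r < f x) :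
    ∃ g ∈ A, (∀ y, 0 ≤ g y ∧ g y ≤ f y) ∧ r < g x := by
  rcases lt_or_ge r 0 with hr0 | hr0
  · exact ⟨0, hA.zero_mem, fun y => ⟨le_rfl, hf y⟩, hr0⟩
  obtain ⟨c, hrc, hcf⟩ := exists_between hr
  obtain ⟨t, hrt, htc⟩ := exists_between hrc
  have ht : 0 < t := hr0.trans_lt hrt
  obtain ⟨h, hhA, hh, hhx, hhF⟩ := hA.exists_bump_le_of_separates hsep
    (isClosed_le f.continuous continuous_const : IsClosed {y | f y ≤ c}) (not_le.2 hcf)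
    ((one_lt_div ht).2 htc)
  refine ⟨t • h, hA.smul_mem t hhA, fun y => ⟨mul_nonneg ht.le (hh y).1, ?_⟩, by simpa [hhx]⟩
  show t * h y ≤ f y
  rcases le_or_gt (f y) c with hy | hy
  · simp [hhF y hy, hf y]
  · calc t * h y ≤ t * (c / t) := mul_le_mul_of_nonneg_left (hh y).2 ht.le
      _ = c := mul_div_cancel₀ c ht.ne'
      _ ≤ f y := hy.le

lemma isLUB_of_separates (hA : IsClosedSublattice A)
    (hsep : ∀ F : Set Y, IsClosed F → ∀ x ∉ F, ∃ g ∈ A, g x = 1 ∧ ∀ y ∈ F, g y = 0)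
    {f : Y →ᵇ ℝ} (hf : ∀ x, 0 ≤ f x) (x : Y) :
    IsLUB {r : ℝ | ∃ g ∈ A, (∀ y, 0 ≤ g y ∧ g y ≤ f y) ∧ g x = r} (f x) := by
  refine ⟨?_, fun b hb => le_of_forall_lt fun r hr => ?_⟩
  · rintro _ ⟨g, -, hg, rfl⟩
    exact (hg x).2
  · obtain ⟨g, hgA, hg, hrg⟩ := hA.exists_le_lt_of_separates hsep hf hr
    exact hrg.trans_le (hb ⟨g, hgA, hg, rfl⟩)

lemma exists_monotone_tendsto_of_isLUB [HereditarilyLindelofSpace Y]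
    (hA : IsClosedSublattice A) {f : Y →ᵇ ℝ} (hf : ∀ x, 0 ≤ f x)
    (hlub : ∀ x, IsLUB {r : ℝ | ∃ g ∈ A, (∀ y, 0 ≤ g y ∧ g y ≤ f y) ∧ g x = r} (f x)) :
    ∃ g : ℕ → Y →ᵇ ℝ, (∀ j, g j ∈ A) ∧ (∀ j x, 0 ≤ g j x) ∧ (∀ x, Monotone fun j => g j x) ∧
      (∀ x, Tendsto (fun j => g j x) atTop (𝓝 (f x))) := by
  obtain ⟨v, hvS, hv⟩ := BoundedContinuousFunction.exists_seq_mem_isLUB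
    (S := {g | g ∈ A ∧ ∀ y, 0 ≤ g y ∧ g y ≤ f y}) ⟨0, hA.zero_mem, fun y => ⟨le_rfl, hf y⟩⟩
    (f := f) fun x => by simpa [Set.image, and_assoc] using hlub x
  have hmono : ∀ x, Monotone fun j => partialSups v j x :=
    fun x _ _ hij => (partialSups v).monotone hij x
  refine ⟨partialSups v, hA.partialSups_mem fun k => (hvS k).1,
    fun j x => ((hvS 0).2 x).1.trans (le_partialSups_of_le v (Nat.zero_le j) x), hmono,
    fun x => tendsto_atTop_isLUB (hmono x) ⟨?_, fun b hb => (hv x).2 ?_⟩⟩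
  · rintro _ ⟨j, rfl⟩
    exact partialSups_le v j f (fun k _ y => ((hvS k).2 y).2) x
  · rintro _ ⟨k, rfl⟩
    exact (le_partialSups v k x).trans (hb ⟨k, rfl⟩)

lemma separates_of_exists_monotone_tendsto [NormalSpace Y] [T1Space Y]
    (hA : IsClosedSublattice A)
    (happrox : ∀ f : Y →ᵇ ℝ, (∀ x, 0 ≤ f x) → ∃ g : ℕ → Y →ᵇ ℝ,
      (∀ j, g j ∈ A) ∧ (∀ j x, 0 ≤ g j x) ∧ (∀ x, Monotone fun j => g j x) ∧
      (∀ x, Tendsto (fun j => g j x) atTop (𝓝 (f x))))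
    (F : Set Y) (hF : IsClosed F) (x : Y) (hx : x ∉ F) :
    ∃ g ∈ A, g x = 1 ∧ ∀ y ∈ F, g y = 0 := by
  obtain ⟨f, hfF, hfx, hf01⟩ := exists_bounded_zero_one_of_closed hF isClosed_singleton
    (Set.disjoint_singleton_right.2 hx)
  obtain ⟨g, hgA, -, hgmono, hglim⟩ := happrox f fun y => (hf01 y).1
  obtain ⟨j, hj⟩ : ∃ j, 0 < g j x :=
    ((hglim x).eventually (eventually_gt_nhds (by simp [hfx rfl]))).exists
  refine hA.exists_eq_one_eq_zero_of_pos (hgA j) hj fun y hy => ?_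
  simpa [hfF hy] using (hgmono y).ge_of_tendsto (hglim y) j

lemma separates_of_isTopologicalBasis (hA : IsClosedSublattice A)
    (hbasis : TopologicalSpace.IsTopologicalBasis {U : Set Y | ∃ g ∈ A, U = {x : Y | 0 < g x}})
    (F : Set Y) (hF : IsClosed F) (x : Y) (hx : x ∉ F) :
    ∃ g ∈ A, g x = 1 ∧ ∀ y ∈ F, g y = 0 := by
  obtain ⟨_, ⟨g, hgA, rfl⟩, hgx, hgF⟩ := hbasis.exists_subset_of_mem_open hx hF.isOpen_compl
  exact hA.exists_eq_one_eq_zero_of_pos hgA hgx fun y hy => not_lt.1 fun hgy => hgF hgy hy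

end IsClosedSublattice

lemma isTopologicalBasis_of_separates
    (hsep : ∀ F : Set Y, IsClosed F → ∀ x ∉ F, ∃ g ∈ A, g x = 1 ∧ ∀ y ∈ F, g y = 0) :
    TopologicalSpace.IsTopologicalBasis {U : Set Y | ∃ g ∈ A, U = {x : Y | 0 < g x}} := by
  refine TopologicalSpace.isTopologicalBasis_of_isOpen_of_nhds ?_ fun x U hxU hU => ?_
  · rintro _ ⟨g, -, rfl⟩
    exact isOpen_lt continuous_const g.continuous
  · obtain ⟨g, hgA, hgx, hgU⟩ := hsep Uᶜ hU.isClosed_compl x (not_not.2 hxU)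
    refine ⟨_, ⟨g, hgA, rfl⟩, by simp [hgx], fun y hy => not_not.1 fun hyU => ?_⟩
    simp [hgU y hyU] at hy

end Sublattice

theorem stmt0 {X : Type*} [TopologicalSpace X] [PolishSpace X]
    (A : Set (X →ᵇ ℝ)) (hA : IsClosedSublattice A) :
    List.TFAE
      [ -- (A2)
        ∀ F : Set X, IsClosed F → ∀ x ∉ F, ∃ g ∈ A, g x = 1 ∧ ∀ y ∈ F, g y = 0,
        -- (A3)
        ∀ f : X →ᵇ ℝ, (∀ x, 0 ≤ f x) → ∀ x : X,
          IsLUB {r : ℝ | ∃ g ∈ A, (∀ y, 0 ≤ g y ∧ g y ≤ f y) ∧ g x = r} (f x),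
        -- (A4)
        ∀ f : X →ᵇ ℝ, (∀ x, 0 ≤ f x) → ∃ g : ℕ → X →ᵇ ℝ,
          (∀ j, g j ∈ A) ∧ (∀ j x, 0 ≤ g j x) ∧ (∀ x, Monotone fun j => g j x) ∧
          (∀ x, Tendsto (fun j => g j x) atTop (𝓝 (f x))),
        -- (A5)
        TopologicalSpace.IsTopologicalBasis {U : Set X | ∃ g ∈ A, U = {x : X | 0 < g x}} ] := by
  tfae_have 1 → 2 := fun hsep f hf => hA.isLUB_of_separates hsep hf
  tfae_have 2 → 3 := fun hlub f hf => hA.exists_monotone_tendsto_of_isLUB hf (hlub f hf)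
  tfae_have 3 → 1 := hA.separates_of_exists_monotone_tendsto
  tfae_have 1 → 4 := isTopologicalBasis_of_separates
  tfae_have 4 → 1 := hA.separates_of_isTopologicalBasis
  tfae_finish

end AMPaper

end
end

section
/- Let A(X) be an acceptable subspace of C_b(X). If A(X) contains a function h with inf_{x∈X} h(x) > 0, then the topologies τ_A and τ_b coincide on M^+(X). -/
open MeasureTheory Filter Topology BoundedContinuousFunction ENNReal NNReal

noncomputable section

/-!
Every `g ∈ C_b(X)` is the pointwise supremum of `{f ∈ A | f ≤ g}`: after subtracting a function
of `A` lying below `g` (a multiple of `h`) we may assume `g ≥ 0`, and then (A2) yields, for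
`q < α < g x`, a bump `α • φ ∈ A` below `g` with value `α` at `x`. This family is closed under `⊔`,
so second countability extracts from it an increasing sequence converging pointwise to `g`, and
monotone convergence gives `∫ g dμ = sup {∫ f dμ | f ∈ A, f ≤ g}`. Hence `μ ↦ ∫ g dμ` is
`τ_A`-lower semicontinuous, and applied to `-g` also upper semicontinuous.
-/

namespace BoundedContinuousFunction

variable {X : Type*} [TopologicalSpace X] [SecondCountableTopology X]

theorem exists_seq_mem_lt_apply_of_lt {D : Set (X →ᵇ ℝ)} (hD : D.Nonempty) {g : X → ℝ}
    (hg : ∀ x, ∀ q < g x, ∃ f ∈ D, q < f x) :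
    ∃ e : ℕ → X →ᵇ ℝ, (∀ n, e n ∈ D) ∧ ∀ x, ∀ q < g x, ∃ n, q < e n x := by
  have hcover : ∀ r : ℚ, ∃ T ⊆ D, T.Countable ∧
      {x | (r : ℝ) < g x} ⊆ ⋃ f ∈ T, {x | (r : ℝ) < f x} := by
    intro r
    obtain ⟨T, hTD, hTc, hT⟩ := TopologicalSpace.isOpen_biUnion_countable D
      (fun f : X →ᵇ ℝ => {x | (r : ℝ) < f x}) fun f _ => isOpen_lt continuous_const f.continuous
    refine ⟨T, hTD, hTc, fun x hx => hT ▸ ?_⟩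
    simpa using hg x r hx
  choose T hTD hTc hT using hcover
  obtain ⟨f₀, hf₀⟩ := hD
  obtain ⟨e, he⟩ :=
    ((Set.countable_iUnion hTc).insert f₀).exists_eq_range (Set.insert_nonempty _ _)
  refine ⟨e, fun n => ?_, fun x q hq => ?_⟩
  · rcases (he ▸ Set.mem_range_self n : e n ∈ insert f₀ (⋃ r, T r)) with hn | hn
    · exact hn ▸ hf₀
    · obtain ⟨r, hr⟩ := Set.mem_iUnion.1 hn
      exact hTD r hr
  · obtain ⟨r, hqr, hrg⟩ := exists_rat_btwn hq
    obtain ⟨f, hfT, hf⟩ := Set.mem_iUnion₂.1 (hT r hrg)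
    obtain ⟨n, rfl⟩ : f ∈ Set.range e := he ▸ Set.mem_insert_of_mem _ (Set.mem_iUnion.2 ⟨r, hfT⟩)
    exact ⟨n, hqr.trans hf⟩

theorem exists_monotone_seq_mem_tendsto {D : Set (X →ᵇ ℝ)} (hD : D.Nonempty)
    (hDsup : SupClosed D) {g : X → ℝ} (hDg : ∀ f ∈ D, ∀ x, f x ≤ g x)
    (hg : ∀ x, ∀ q < g x, ∃ f ∈ D, q < f x) :
    ∃ F : ℕ → X →ᵇ ℝ, (∀ n, F n ∈ D) ∧ Monotone F ∧
      ∀ x, Tendsto (fun n => F n x) atTop (𝓝 (g x)) := by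
  obtain ⟨e, heD, he⟩ := exists_seq_mem_lt_apply_of_lt hD hg
  have hFD : ∀ n, partialSups e n ∈ D := fun n =>
    hDsup.finsetSup'_mem Finset.nonempty_Iic fun k _ => heD k
  refine ⟨partialSups e, hFD, (partialSups e).monotone,
    fun x => tendsto_order.2 ⟨fun q hq => ?_, fun q hq => ?_⟩⟩
  · obtain ⟨n, hn⟩ := he x q hq
    exact eventually_atTop.2 ⟨n, fun m hm => hn.trans_le (le_partialSups_of_le e hm x)⟩
  · exact Eventually.of_forall fun n => (hDg _ (hFD n) x).trans_lt hq

theorem exists_mem_lt_integral_of_lt_integral [MeasurableSpace X] [OpensMeasurableSpace X]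
    (μ : Measure X) [IsFiniteMeasure μ] {D : Set (X →ᵇ ℝ)} (hD : D.Nonempty)
    (hDsup : SupClosed D) {g : X →ᵇ ℝ} (hDg : ∀ f ∈ D, f ≤ g)
    (hg : ∀ x, ∀ q < g x, ∃ f ∈ D, q < f x) {r : ℝ} (hr : r < ∫ x, g x ∂μ) :
    ∃ f ∈ D, r < ∫ x, f x ∂μ := by
  obtain ⟨F, hFD, hFmono, hFg⟩ := exists_monotone_seq_mem_tendsto hD hDsup hDg hg
  have hlim : Tendsto (fun n => ∫ x, F n x ∂μ) atTop (𝓝 (∫ x, g x ∂μ)) :=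
    integral_tendsto_of_tendsto_of_monotone (fun n => (F n).integrable μ) (g.integrable μ)
      (ae_of_all _ fun x _ _ hmn => hFmono hmn x) (ae_of_all _ hFg)
  obtain ⟨n, hn⟩ := (hlim.eventually (eventually_gt_nhds hr)).exists
  exact ⟨F n, hFD n, hn⟩

end BoundedContinuousFunction

namespace AMPaper

variable {X : Type*} [TopologicalSpace X] {A : Set (X →ᵇ ℝ)}

theorem IsClosedSublattice.exists_mem_le (hA : IsClosedSublattice A) {h : X →ᵇ ℝ} (hmem : h ∈ A)
    {c : ℝ} (hc : 0 < c) (hbelow : ∀ x, c ≤ h x) (g : X →ᵇ ℝ) : ∃ k ∈ A, k ≤ g := by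
  refine ⟨(-(‖g‖ / c)) • h, hA.smul_mem _ hmem, fun x => ?_⟩
  have hgh : ‖g‖ ≤ ‖g‖ / c * h x :=
    calc ‖g‖ = ‖g‖ / c * c := by field_simp
      _ ≤ ‖g‖ / c * h x := by gcongr; exact hbelow x
  have hg : -‖g‖ ≤ g x := (neg_le_neg (g.norm_coe_le_norm x)).trans (neg_abs_le (g x))
  change -(‖g‖ / c) * h x ≤ g x
  linarith

namespace IsAcceptable

theorem supClosed_inter_Iic (hA : IsAcceptable A) (g : X →ᵇ ℝ) : SupClosed (A ∩ Set.Iic g) :=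
  fun _ hf _ hf' => ⟨hA.sup_mem hf.1 hf'.1 fun _ => rfl, Set.mem_Iic.2 (sup_le hf.2 hf'.2)⟩

theorem exists_mem_le_lt_apply_of_nonneg (hA : IsAcceptable A) {g : X →ᵇ ℝ} (hg : 0 ≤ g)
    {x : X} {q : ℝ} (hq : q < g x) : ∃ f ∈ A, f ≤ g ∧ q < f x := by
  rcases lt_or_ge q 0 with hq0 | hq0
  · exact ⟨0, hA.zero_mem, hg, hq0⟩
  obtain ⟨α, hqα, hαg⟩ := exists_between hq
  have hα : 0 ≤ α := hq0.trans hqα.le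
  obtain ⟨φ, hφA, -, hφ1, hφx, hφ⟩ :=
    hA.sep {y | g y ≤ α} (isClosed_le g.continuous continuous_const) x hαg.not_ge
  refine ⟨α • φ, hA.smul_mem α hφA, fun y => ?_, by simpa [hφx] using hqα⟩
  by_cases hy : g y ≤ α
  · simpa [hφ y hy] using hg y
  · calc α * φ y ≤ α * 1 := mul_le_mul_of_nonneg_left (hφ1 y) hα
      _ ≤ g y := by linarith

theorem exists_mem_le_lt_apply (hA : IsAcceptable A) {g k : X →ᵇ ℝ} (hk : k ∈ A) (hkg : k ≤ g)
    {x : X} {q : ℝ} (hq : q < g x) : ∃ f ∈ A, f ≤ g ∧ q < f x := by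
  obtain ⟨f, hfA, hfg, hqf⟩ := hA.exists_mem_le_lt_apply_of_nonneg (sub_nonneg.2 hkg)
    (show q - k x < g x - k x by linarith)
  refine ⟨f + k, hA.add_mem hfA hk, fun y => ?_, ?_⟩
  · have : f y ≤ g y - k y := hfg y
    change f y + k y ≤ g y
    linarith
  · change q < f x + k x
    linarith

theorem exists_mem_le_lt_integral [SecondCountableTopology X] [MeasurableSpace X]
    [OpensMeasurableSpace X] (hA : IsAcceptable A) {g k : X →ᵇ ℝ} (hk : k ∈ A) (hkg : k ≤ g)
    (μ : Measure X) [IsFiniteMeasure μ] {r : ℝ} (hr : r < ∫ x, g x ∂μ) :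
    ∃ f ∈ A, f ≤ g ∧ r < ∫ x, f x ∂μ := by
  have hsup (x : X) (q : ℝ) (hq : q < g x) : ∃ f ∈ A ∩ Set.Iic g, q < f x :=
    let ⟨f, hfA, hfg, hf⟩ := hA.exists_mem_le_lt_apply hk hkg hq
    ⟨f, ⟨hfA, hfg⟩, hf⟩
  obtain ⟨f, ⟨hfA, hfg⟩, hf⟩ := exists_mem_lt_integral_of_lt_integral μ (D := A ∩ Set.Iic g) ⟨k, hk, hkg⟩
    (hA.supClosed_inter_Iic g) (fun _ hf => hf.2) hsup hr
  exact ⟨f, hfA, hfg, hf⟩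

end IsAcceptable

section Topology

variable [MeasurableSpace X]

theorem continuous_integral_tauA_of_mem {g : X →ᵇ ℝ} (hg : g ∈ A) :
    Continuous[tauA X A, _] fun μ : FiniteMeasure X => ∫ x, g x ∂(μ : Measure X) :=
  continuous_iff_le_induced.2 (iInf₂_le g hg)

variable [SecondCountableTopology X] [OpensMeasurableSpace X]

theorem lowerSemicontinuous_integral_tauA (hA : IsAcceptable A) {g k : X →ᵇ ℝ} (hk : k ∈ A)
    (hkg : k ≤ g) :
    @LowerSemicontinuous _ _ (tauA X A) _ fun μ : FiniteMeasure X => ∫ x, g x ∂(μ : Measure X) := by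
  let _ := tauA X A
  intro μ r hr
  obtain ⟨f, hfA, hfg, hf⟩ := hA.exists_mem_le_lt_integral hk hkg (μ : Measure X) hr
  filter_upwards [(continuous_integral_tauA_of_mem hfA).continuousAt.eventually
    (eventually_gt_nhds hf)] with ν hν
  exact hν.trans_le (integral_mono (f.integrable _) (g.integrable _) hfg)

theorem continuous_integral_tauA (hA : IsAcceptable A) (hlow : ∀ g : X →ᵇ ℝ, ∃ k ∈ A, k ≤ g)
    (g : X →ᵇ ℝ) :
    Continuous[tauA X A, _] fun μ : FiniteMeasure X => ∫ x, g x ∂(μ : Measure X) := by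
  let _ := tauA X A
  obtain ⟨k, hk, hkg⟩ := hlow g
  obtain ⟨k', hk', hkg'⟩ := hlow (-g)
  refine continuous_iff_lower_upperSemicontinuous.2
    ⟨lowerSemicontinuous_integral_tauA hA hk hkg, fun μ r hr => ?_⟩
  have hneg : -r < ∫ x, (-g) x ∂(μ : Measure X) := by simpa [integral_neg] using hr
  filter_upwards [lowerSemicontinuous_integral_tauA hA hk' hkg' μ (-r) hneg]
    with ν (hν : -r < ∫ x, (-g) x ∂(ν : Measure X))
  simpa [integral_neg] using hν

end Topology

theorem stmt3 {X : Type*} [TopologicalSpace X] [PolishSpace X] [MeasurableSpace X] [BorelSpace X]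
    (A : Set (X →ᵇ ℝ)) (hA : IsAcceptable A)
    (h : X →ᵇ ℝ) (hmem : h ∈ A) (c : ℝ) (hc : 0 < c) (hbelow : ∀ x, c ≤ h x) :
    tauA X A = taub X :=
  le_antisymm
    (le_iInf fun g => continuous_iff_le_induced.1
      (continuous_integral_tauA hA (hA.exists_mem_le hmem hc hbelow) g))
    (le_iInf₂ fun g _ => iInf_le _ g)

end AMPaper

end
end

section
/- Let A(X) be an acceptable subspace of C_b(X) and let P(X) denote the set of Borel probability measures on X. Then the topologies τ_A and τ_b coincide on P(X). -/
/-!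
For `0 ≤ f ∈ C_b(X)` the family `{g ∈ A | g ≤ f}` is closed under `⊔` and has pointwise supremum
`f`: below `f x` lies a multiple of an (A2)-bump vanishing where `f` is small. On a
second-countable space countably many members already have supremum `f`, so by monotone
convergence some `g ∈ A` with `g ≤ f` has `∫ g dμ` arbitrarily close to `∫ f dμ`. Hence
`τ_A`-convergence `νᵢ → μ` gives `liminf ∫ f dνᵢ ≥ ∫ f dμ` for nonnegative `f`. For probability
measures, shifting by constants removes the sign condition, and applying this to `±f` gives
`τ_b`-convergence.
-/

open MeasureTheory Filter Topology BoundedContinuousFunction ENNReal NNReal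

noncomputable section

namespace AMPaper

variable (X : Type*) [TopologicalSpace X] [MeasurableSpace X]

variable {X}

section Approximation

variable {α : Type*} [TopologicalSpace α]

theorem exists_countable_lt_apply_of_lowerSemicontinuous [SecondCountableTopology α]
    {ι : Type*} (g : ι → α → ℝ) (hg : ∀ i, LowerSemicontinuous (g i)) :
    ∃ s : Set ι, s.Countable ∧ ∀ x t, (∃ i, t < g i x) → ∃ i ∈ s, t < g i x := by
  choose T hTc hT using fun q : ℚ =>
    TopologicalSpace.isOpen_iUnion_countable (fun i => {x | (q : ℝ) < g i x})
      (fun i => (hg i).isOpen_preimage q)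
  refine ⟨⋃ q, T q, Set.countable_iUnion hTc, ?_⟩
  rintro x t ⟨i, hi⟩
  obtain ⟨q, htq, hqi⟩ := exists_rat_btwn hi
  have hx : x ∈ ⋃ j ∈ T q, {x | (q : ℝ) < g j x} := (hT q).symm ▸ Set.mem_iUnion.2 ⟨i, hqi⟩
  obtain ⟨j, hj, hqj⟩ := Set.mem_iUnion₂.1 hx
  exact ⟨j, Set.mem_iUnion.2 ⟨q, hj⟩, htq.trans hqj⟩

theorem exists_mem_lt_integral_of_supClosed [SecondCountableTopology α]
    [MeasurableSpace α] [OpensMeasurableSpace α] {D : Set (α →ᵇ ℝ)} (hD : SupClosed D)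
    (hne : D.Nonempty) {f : α →ᵇ ℝ} (hle : ∀ g ∈ D, g ≤ f)
    (happrox : ∀ x, ∀ t < f x, ∃ g ∈ D, t < g x) (μ : Measure α) [IsFiniteMeasure μ] {a : ℝ}
    (ha : a < ∫ x, f x ∂μ) : ∃ g ∈ D, a < ∫ x, g x ∂μ := by
  obtain ⟨s, hsc, hs⟩ := exists_countable_lt_apply_of_lowerSemicontinuous
    (fun g : D => ⇑(g : α →ᵇ ℝ)) (fun g => g.1.continuous.lowerSemicontinuous)
  obtain ⟨e, he⟩ := (hsc.insert ⟨_, hne.some_mem⟩).exists_eq_range (Set.insert_nonempty _ _)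
  set h := partialSups fun n => ((e n : D) : α →ᵇ ℝ)
  have hhD : ∀ n, h n ∈ D := fun n => hD.finsetSup'_mem Finset.nonempty_Iic fun j _ => (e j).2
  have htendsto : ∀ x, Tendsto (fun n => h n x) atTop (𝓝 (f x)) := by
    intro x
    refine tendsto_order.2 ⟨fun t ht => ?_,
      fun b hb => Eventually.of_forall fun n => (hle _ (hhD n) x).trans_lt hb⟩
    obtain ⟨g, hgD, htg⟩ := happrox x t ht
    obtain ⟨g', hg's, htg'⟩ := hs x t ⟨⟨g, hgD⟩, htg⟩
    obtain ⟨n, rfl⟩ : g' ∈ Set.range e := he ▸ Set.mem_insert_of_mem _ hg's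
    filter_upwards [eventually_ge_atTop n] with m hm
    exact htg'.trans_le (le_partialSups_of_le (fun n => ((e n : D) : α →ᵇ ℝ)) hm x)
  have hlim := integral_tendsto_of_tendsto_of_monotone (fun n => (h n).integrable μ)
    (f.integrable μ) (Eventually.of_forall fun x _ _ hnm => h.monotone hnm x)
    (Eventually.of_forall htendsto)
  obtain ⟨n, hn⟩ := (hlim.eventually (lt_mem_nhds ha)).exists
  exact ⟨h n, hhD n, hn⟩

end Approximation

section Acceptable

variable {α : Type*} [TopologicalSpace α] {A : Set (α →ᵇ ℝ)}

theorem IsAcceptable.exists_le_lt_apply (hA : IsAcceptable A) {f : α →ᵇ ℝ} (hf : 0 ≤ f)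
    {x : α} {t : ℝ} (ht : t < f x) : ∃ g ∈ A, g ≤ f ∧ t < g x := by
  rcases lt_or_ge t 0 with ht0 | ht0
  · exact ⟨0, hA.zero_mem, hf, ht0⟩
  obtain ⟨s, hts, hsf⟩ := exists_between ht
  obtain ⟨g, hgA, hg0, hg1, hgx, hgF⟩ :=
    hA.sep {y | f y ≤ s} (isClosed_le f.continuous continuous_const) x hsf.not_ge
  refine ⟨s • g, hA.smul_mem s hgA, fun y => show s * g y ≤ f y from ?_,
    by simpa [hgx] using hts⟩
  by_cases hy : f y ≤ s
  · simpa [hgF y hy] using hf y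
  · linarith [mul_le_of_le_one_right (ht0.trans hts.le) (hg1 y), not_le.1 hy]

variable [MeasurableSpace α] [OpensMeasurableSpace α] [SecondCountableTopology α]

theorem IsAcceptable.exists_le_lt_integral (hA : IsAcceptable A) {f : α →ᵇ ℝ} (hf : 0 ≤ f)
    (μ : Measure α) [IsFiniteMeasure μ] {a : ℝ} (ha : a < ∫ x, f x ∂μ) :
    ∃ g ∈ A, g ≤ f ∧ a < ∫ x, g x ∂μ := by
  have hD : SupClosed {g | g ∈ A ∧ g ≤ f} := fun g hg g' hg' =>
    ⟨hA.sup_mem hg.1 hg'.1 fun _ => rfl, sup_le hg.2 hg'.2⟩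
  obtain ⟨g, hg, hga⟩ := exists_mem_lt_integral_of_supClosed hD ⟨0, hA.zero_mem, hf⟩
    (fun g hg => hg.2) (fun _ _ ht =>
      let ⟨g, hgA, hgf, htg⟩ := hA.exists_le_lt_apply hf ht; ⟨g, ⟨hgA, hgf⟩, htg⟩) μ ha
  exact ⟨g, hg.1, hg.2, hga⟩

variable {ι : Type*} {L : Filter ι} {μ : Measure α} {ν : ι → Measure α}

theorem IsAcceptable.eventually_lt_integral (hA : IsAcceptable A) [IsFiniteMeasure μ]
    [∀ i, IsFiniteMeasure (ν i)]
    (hconv : ∀ g ∈ A, Tendsto (fun i => ∫ x, g x ∂ν i) L (𝓝 (∫ x, g x ∂μ)))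
    {f : α →ᵇ ℝ} (hf : 0 ≤ f) {a : ℝ} (ha : a < ∫ x, f x ∂μ) :
    ∀ᶠ i in L, a < ∫ x, f x ∂ν i := by
  obtain ⟨g, hgA, hgf, hag⟩ := hA.exists_le_lt_integral hf μ ha
  filter_upwards [(hconv g hgA).eventually (lt_mem_nhds hag)] with i hi
  exact hi.trans_le (integral_mono (g.integrable _) (f.integrable _) hgf)

variable [IsProbabilityMeasure μ] [∀ i, IsProbabilityMeasure (ν i)]

theorem IsAcceptable.eventually_lt_integral_of_isProbabilityMeasure (hA : IsAcceptable A)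
    (hconv : ∀ g ∈ A, Tendsto (fun i => ∫ x, g x ∂ν i) L (𝓝 (∫ x, g x ∂μ)))
    (f : α →ᵇ ℝ) {a : ℝ} (ha : a < ∫ x, f x ∂μ) :
    ∀ᶠ i in L, a < ∫ x, f x ∂ν i := by
  -- `A` need not contain constants; the shift making `f` nonnegative is undone by `ν i univ = 1`.
  set f' := f + BoundedContinuousFunction.const α ‖f‖
  have hf' : 0 ≤ f' := fun x => by
    simpa [f', neg_le_iff_add_nonneg] using (abs_le.1 (f.norm_coe_le_norm x)).1
  have hint : ∀ (ρ : Measure α) [IsProbabilityMeasure ρ], ∫ x, f' x ∂ρ = ∫ x, f x ∂ρ + ‖f‖ :=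
    fun ρ _ => by simp [f', integral_add (f.integrable ρ) (integrable_const _)]
  filter_upwards [hA.eventually_lt_integral hconv hf' (a := a + ‖f‖) (by linarith [hint μ])]
    with i hi
  linarith [hint (ν i)]

theorem IsAcceptable.tendsto_integral (hA : IsAcceptable A)
    (hconv : ∀ g ∈ A, Tendsto (fun i => ∫ x, g x ∂ν i) L (𝓝 (∫ x, g x ∂μ)))
    (f : α →ᵇ ℝ) : Tendsto (fun i => ∫ x, f x ∂ν i) L (𝓝 (∫ x, f x ∂μ)) := by
  refine tendsto_order.2
    ⟨fun a ha => hA.eventually_lt_integral_of_isProbabilityMeasure hconv f ha, fun b hb => ?_⟩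
  filter_upwards [hA.eventually_lt_integral_of_isProbabilityMeasure hconv (-f) (a := -b)
    (by simpa [integral_neg] using hb)] with i hi
  simpa [integral_neg] using hi

end Acceptable

section Topology

variable {α : Type*} [TopologicalSpace α] [MeasurableSpace α]

theorem tendsto_nhds_tauA_iff {A : Set (α →ᵇ ℝ)} {ι : Type*} {L : Filter ι}
    {u : ι → FiniteMeasure α} {μ : FiniteMeasure α} :
    Tendsto u L (@nhds _ (tauA α A) μ) ↔ ∀ g ∈ A,
      Tendsto (fun i => ∫ x, g x ∂(u i : Measure α)) L (𝓝 (∫ x, g x ∂(μ : Measure α))) := by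
  rw [tauA]
  simp only [_root_.nhds_iInf, nhds_induced, tendsto_iInf, tendsto_comap_iff]
  rfl

theorem taub_eq_tauA_univ : taub α = tauA α Set.univ := by
  simp only [taub, tauA, Set.mem_univ, iInf_pos]

theorem taub_le_tauA (A : Set (α →ᵇ ℝ)) : taub α ≤ tauA α A :=
  le_iInf₂ fun g _ => iInf_le _ g

end Topology

theorem stmt4 {X : Type*} [TopologicalSpace X] [PolishSpace X] [MeasurableSpace X] [BorelSpace X]
    (A : Set (X →ᵇ ℝ)) (hA : IsAcceptable A) :
    TopologicalSpace.induced
        (Subtype.val : {μ : FiniteMeasure X // IsProbabilityMeasure (μ : Measure X)} →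
          FiniteMeasure X) (tauA X A) =
      TopologicalSpace.induced Subtype.val (taub X) := by
  refine le_antisymm ?_ (induced_mono (taub_le_tauA A))
  rw [le_iff_nhds]
  rintro ⟨μ, hμ⟩
  rw [@nhds_induced _ _ (tauA X A), @nhds_induced _ _ (taub X), ← tendsto_iff_comap,
    taub_eq_tauA_univ, tendsto_nhds_tauA_iff]
  have : ∀ ν : {μ : FiniteMeasure X // IsProbabilityMeasure (μ : Measure X)},
      IsProbabilityMeasure (ν.1 : Measure X) := fun ν => ν.2
  exact fun f _ => hA.tendsto_integral (tendsto_nhds_tauA_iff.1 tendsto_comap) f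

end AMPaper

end
end

section
/- If E_1 ⊆ E_2 ⊆ … is an increasing sequence of subsets of M^+(X) and E = ∪_i E_i, then AM(E) ≤ lim_{i→∞} M_1(E_i). -/
open MeasureTheory Filter Topology BoundedContinuousFunction ENNReal NNReal

noncomputable section

namespace AMPaper

variable (X : Type*) [TopologicalSpace X] [MeasurableSpace X]

variable {X}

/-! For every `c` above all `M_p(E_i)` choose `ρ_i` admissible for `E_i` with `∫ ρ_i^p dm < c`.
Since the `E_i` increase, each `μ ∈ ⋃ E_i` lies in `E_j` for all large `j`, so `(ρ_j)` is an
admissible sequence for the union, and `AM_p(⋃ E_i) ≤ c`. -/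

section

variable {X : Type*} [TopologicalSpace X] [MeasurableSpace X]

theorem exists_admissibleFun_lintegral_lt {p : ℝ} {m : Measure X} {E : Set (FiniteMeasure X)}
    {c : ℝ≥0∞} (h : Mmod p m E < c) : ∃ ρ, AdmissibleFun ρ E ∧ ∫⁻ x, ρ x ^ p ∂m < c := by
  simpa only [Mmod, iInf_lt_iff, exists_prop] using h

theorem AdmissibleSeq.iUnion_of_monotone {E : ℕ → Set (FiniteMeasure X)} (hmono : Monotone E)
    {ρ : ℕ → X → ℝ≥0∞} (hρ : ∀ j, AdmissibleFun (ρ j) (E j)) :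
    AdmissibleSeq ρ (⋃ i, E i) := by
  refine ⟨fun j => (hρ j).1, fun μ hμ => ?_⟩
  obtain ⟨i, hi⟩ := Set.mem_iUnion.mp hμ
  refine le_liminf_of_le (by isBoundedDefault) ?_
  filter_upwards [eventually_ge_atTop i] with j hj
  exact (hρ j).2 μ (hmono hj hi)

theorem AMmod_iUnion_le_iSup_Mmod (p : ℝ) (m : Measure X) {E : ℕ → Set (FiniteMeasure X)}
    (hmono : Monotone E) : AMmod p m (⋃ i, E i) ≤ ⨆ i, Mmod p m (E i) := by
  refine le_of_forall_gt_imp_ge_of_dense fun c hc => ?_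
  have hE : ∀ i, Mmod p m (E i) < c := fun i => (le_iSup _ i).trans_lt hc
  choose ρ hρ hρc using fun i => exists_admissibleFun_lintegral_lt (hE i)
  calc AMmod p m (⋃ i, E i)
      ≤ liminf (fun j => ∫⁻ x, ρ j x ^ p ∂m) atTop :=
        iInf₂_le ρ (AdmissibleSeq.iUnion_of_monotone hmono hρ)
    _ ≤ c := liminf_le_of_frequently_le' (Frequently.of_forall fun j => (hρc j).le)

end

theorem stmt8_general {X : Type*} [TopologicalSpace X] [MeasurableSpace X]
    (m : Measure X) (E : ℕ → Set (FiniteMeasure X)) (hmono : Monotone E) :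
    AMmod 1 m (⋃ i, E i) ≤ ⨆ i, Mmod 1 m (E i) :=
  AMmod_iUnion_le_iSup_Mmod 1 m hmono

theorem stmt8 {X : Type*} [TopologicalSpace X] [PolishSpace X] [MeasurableSpace X] [BorelSpace X]
    (m : Measure X) [IsFiniteMeasureOnCompacts m] [m.InnerRegular]
    (E : ℕ → Set (FiniteMeasure X)) (hmono : Monotone E) :
    AMmod 1 m (⋃ i, E i) ≤ ⨆ i, Mmod 1 m (E i) :=
  stmt8_general m E hmono

end AMPaper

end
end

section
/- If E_1 ⊆ E_2 ⊆ … is an increasing sequence of subsets of M^+(X) such that M_1(E_i) = AM(E_i) for each i, then AM(∪_i E_i) = lim_{i→∞} AM(E_i). -/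
open MeasureTheory Filter Topology BoundedContinuousFunction ENNReal NNReal

noncomputable section

namespace AMPaper

variable (X : Type*) [TopologicalSpace X] [MeasurableSpace X]

variable {X}

theorem stmt9 {X : Type*} [TopologicalSpace X] [PolishSpace X] [MeasurableSpace X] [BorelSpace X]
    (m : Measure X) [IsFiniteMeasureOnCompacts m] [m.InnerRegular]
    (E : ℕ → Set (FiniteMeasure X)) (hmono : Monotone E)
    (heq : ∀ i, Mmod 1 m (E i) = AMmod 1 m (E i)) :
    AMmod 1 m (⋃ i, E i) = ⨆ i, AMmod 1 m (E i) := by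
  apply le_antisymm
  · -- AMmod of the union ≤ sup
    refine ENNReal.le_of_forall_pos_le_add (fun ε hε hS => ?_)
    set S := ⨆ i, AMmod 1 m (E i) with hSdef
    have hεpos : (0 : ℝ≥0∞) < ε := by exact_mod_cast hε
    -- for each j, Mmod 1 m (E j) < S + ε
    have hlt : ∀ j, Mmod 1 m (E j) < S + ε := by
      intro j
      have h1 : Mmod 1 m (E j) ≤ S := by
        rw [heq j]; exact le_iSup (fun i => AMmod 1 m (E i)) j
      calc Mmod 1 m (E j) ≤ S := h1
        _ < S + ε := ENNReal.lt_add_right hS.ne hεpos.ne'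
    -- choose near-optimal admissible functions
    have hchoice : ∀ j, ∃ ρ : X → ℝ≥0∞, AdmissibleFun ρ (E j) ∧
        ∫⁻ x, ρ x ^ (1 : ℝ) ∂m < S + ε := by
      intro j
      have := hlt j
      rw [Mmod] at this
      obtain ⟨ρ, hρ⟩ := iInf_lt_iff.mp this
      obtain ⟨hadm, hint⟩ := iInf_lt_iff.mp hρ
      exact ⟨ρ, hadm, hint⟩
    choose ρ hadm hint using hchoice
    -- (ρ j) is an admissible sequence for the union
    have hseq : AdmissibleSeq ρ (⋃ i, E i) := by
      refine ⟨fun j => (hadm j).1, fun μ hμ => ?_⟩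
      obtain ⟨i, hμi⟩ := Set.mem_iUnion.mp hμ
      refine Filter.le_liminf_of_le (by isBoundedDefault) ?_
      exact Filter.eventually_atTop.2
        ⟨i, fun j hj => (hadm j).2 μ (hmono hj hμi)⟩
    calc AMmod 1 m (⋃ i, E i)
        ≤ Filter.liminf (fun j => ∫⁻ x, ρ j x ^ (1 : ℝ) ∂m) Filter.atTop := by
          rw [AMmod]
          exact iInf₂_le ρ hseq
      _ ≤ S + ε :=
          Filter.liminf_le_of_frequently_le
            (Filter.Frequently.of_forall fun j => (hint j).le)
  · refine iSup_le fun i => ?_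
    rw [AMmod, AMmod]
    refine le_iInf fun σ => le_iInf fun hσ => ?_
    exact iInf₂_le σ ⟨hσ.1, fun μ hμ => hσ.2 μ (Set.mem_iUnion.2 ⟨i, hμ⟩)⟩

end AMPaper

end
end

section
/- Let E ⊆ M^+(X). Then the following assertions are equivalent: (i) M_1(E) = AM(E); (ii) M_1(E) = lim_{i→∞} M_1(E_i) for every increasing sequence E_1 ⊆ E_2 ⊆ … of subsets of M^+(X) with ∪_i E_i = E. -/
open MeasureTheory Filter Topology BoundedContinuousFunction ENNReal NNReal

noncomputable section

namespace AMPaper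

variable (X : Type*) [TopologicalSpace X] [MeasurableSpace X]

variable {X}

/-!
If `M_p(E) = AM_p(E)` and `F i ↑ E`, choosing for each `i` an admissible function of `F i` that is
nearly optimal gives an admissible sequence for `E`, so `AM_p(E) ≤ sup_i M_p(F i)`.
Conversely, given an admissible sequence `ρ` for `E` and `c < 1`, the measures `μ ∈ E` with
`∫ ρ_j dμ ≥ c` for all `j ≥ i` increase to `E` as `i → ∞`, and `ρ_j / c` is admissible for the
`i`-th of these families whenever `j ≥ i`; continuity of `M_p` along them and `c → 1` give
`M_p(E) ≤ AM_p(E)`.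
-/

section Moduli

variable {X : Type*} [MeasurableSpace X]

def tailLevelSet (ρ : ℕ → X → ℝ≥0∞) (E : Set (FiniteMeasure X)) (c : ℝ≥0∞) (i : ℕ) :
    Set (FiniteMeasure X) :=
  {μ ∈ E | ∀ j ≥ i, c ≤ ∫⁻ x, ρ j x ∂(μ : Measure X)}

lemma monotone_tailLevelSet (ρ : ℕ → X → ℝ≥0∞) (E : Set (FiniteMeasure X)) (c : ℝ≥0∞) :
    Monotone (tailLevelSet ρ E c) :=
  fun _ _ hii' _ hμ => ⟨hμ.1, fun j hj => hμ.2 j (hii'.trans hj)⟩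

variable [TopologicalSpace X] {p : ℝ} {m : Measure X} {E E' : Set (FiniteMeasure X)}

lemma AdmissibleFun.mono {ρ : X → ℝ≥0∞} (hρ : AdmissibleFun ρ E') (h : E ⊆ E') :
    AdmissibleFun ρ E :=
  ⟨hρ.1, fun μ hμ => hρ.2 μ (h hμ)⟩

lemma AdmissibleFun.admissibleSeq_const {ρ : X → ℝ≥0∞} (hρ : AdmissibleFun ρ E) :
    AdmissibleSeq (fun _ => ρ) E :=
  ⟨fun _ => hρ.1, fun μ hμ => by simpa only [liminf_const] using hρ.2 μ hμ⟩

lemma Mmod_le {ρ : X → ℝ≥0∞} (hρ : AdmissibleFun ρ E) : Mmod p m E ≤ ∫⁻ x, ρ x ^ p ∂m :=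
  iInf₂_le ρ hρ

lemma AMmod_le {ρ : ℕ → X → ℝ≥0∞} (hρ : AdmissibleSeq ρ E) :
    AMmod p m E ≤ liminf (fun j => ∫⁻ x, ρ j x ^ p ∂m) atTop :=
  iInf₂_le ρ hρ

lemma Mmod_mono (h : E ⊆ E') : Mmod p m E ≤ Mmod p m E' :=
  le_iInf₂ fun _ hρ => Mmod_le (hρ.mono h)

lemma exists_admissibleFun_lt_of_Mmod_lt {a : ℝ≥0∞} (h : Mmod p m E < a) :
    ∃ ρ, AdmissibleFun ρ E ∧ ∫⁻ x, ρ x ^ p ∂m < a := by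
  simpa only [Mmod, iInf_lt_iff, exists_prop] using h

lemma AMmod_le_Mmod : AMmod p m E ≤ Mmod p m E :=
  le_iInf₂ fun _ hρ => (AMmod_le hρ.admissibleSeq_const).trans_eq (liminf_const _)

lemma iSup_Mmod_le {F : ℕ → Set (FiniteMeasure X)} (hFE : ⋃ i, F i = E) :
    ⨆ i, Mmod p m (F i) ≤ Mmod p m E :=
  iSup_le fun i => Mmod_mono (hFE ▸ Set.subset_iUnion F i)

lemma admissibleSeq_of_iUnion {F : ℕ → Set (FiniteMeasure X)} (hF : Monotone F)
    (hFE : ⋃ i, F i = E) {ρ : ℕ → X → ℝ≥0∞} (hρ : ∀ i, AdmissibleFun (ρ i) (F i)) :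
    AdmissibleSeq ρ E := by
  refine ⟨fun j => (hρ j).1, fun μ hμ => ?_⟩
  obtain ⟨i, hi⟩ := Set.mem_iUnion.1 (hFE ▸ hμ)
  rw [liminf_eq_iSup_iInf_of_nat]
  exact le_iSup_of_le i (le_iInf₂ fun j hj => (hρ j).2 μ (hF hj hi))

lemma AMmod_le_iSup_Mmod {F : ℕ → Set (FiniteMeasure X)} (hF : Monotone F)
    (hFE : ⋃ i, F i = E) : AMmod p m E ≤ ⨆ i, Mmod p m (F i) := by
  refine ENNReal.le_of_forall_pos_le_add fun ε hε hfin => ?_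
  have hlt : ∀ i, Mmod p m (F i) < (⨆ i, Mmod p m (F i)) + ε := fun i =>
    (le_iSup (fun i => Mmod p m (F i)) i).trans_lt
      (ENNReal.lt_add_right hfin.ne (by exact_mod_cast hε.ne'))
  choose ρ hρ hρ_lt using fun i => exists_admissibleFun_lt_of_Mmod_lt (hlt i)
  exact (AMmod_le (admissibleSeq_of_iUnion hF hFE hρ)).trans
    (liminf_le_of_frequently_le' (Frequently.of_forall fun j => (hρ_lt j).le))

lemma rpow_mul_Mmod_le (hp : 0 ≤ p) {c : ℝ≥0∞} (hc₀ : c ≠ 0) (hc : c ≠ ∞) {ρ : X → ℝ≥0∞}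
    (hρ : LowerSemicontinuous ρ) (hρE : ∀ μ ∈ E, c ≤ ∫⁻ x, ρ x ∂(μ : Measure X)) :
    c ^ p * Mmod p m E ≤ ∫⁻ x, ρ x ^ p ∂m := by
  have hadm : AdmissibleFun (fun x => c⁻¹ * ρ x) E := by
    refine ⟨(ENNReal.continuous_const_mul (ENNReal.inv_ne_top.2 hc₀)).comp_lowerSemicontinuous
      hρ fun a b hab => mul_le_mul_right hab _, fun μ hμ => ?_⟩
    rw [lintegral_const_mul' _ _ (ENNReal.inv_ne_top.2 hc₀)]
    calc (1 : ℝ≥0∞) = c⁻¹ * c := (ENNReal.inv_mul_cancel hc₀ hc).symm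
      _ ≤ c⁻¹ * ∫⁻ x, ρ x ∂(μ : Measure X) := mul_le_mul_right (hρE μ hμ) _
  calc c ^ p * Mmod p m E ≤ c ^ p * ∫⁻ x, (c⁻¹ * ρ x) ^ p ∂m := mul_le_mul_right (Mmod_le hadm) _
    _ = ∫⁻ x, ρ x ^ p ∂m := by
      simp_rw [ENNReal.mul_rpow_of_nonneg _ _ hp]
      rw [lintegral_const_mul' _ _ (ENNReal.rpow_ne_top_of_nonneg hp (ENNReal.inv_ne_top.2 hc₀)),
        ← mul_assoc, ENNReal.inv_rpow, ENNReal.mul_inv_cancel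
          (ENNReal.rpow_pos (pos_iff_ne_zero.2 hc₀) hc).ne' (ENNReal.rpow_ne_top_of_nonneg hp hc),
        one_mul]

lemma iUnion_tailLevelSet {ρ : ℕ → X → ℝ≥0∞} (hρ : AdmissibleSeq ρ E) {c : ℝ≥0∞} (hc : c < 1) :
    ⋃ i, tailLevelSet ρ E c i = E := by
  refine (Set.iUnion_subset fun i μ hμ => hμ.1).antisymm fun μ hμ => ?_
  obtain ⟨i, hi⟩ := eventually_atTop.1 (eventually_lt_of_lt_liminf (hc.trans_le (hρ.2 μ hμ)))
  exact Set.mem_iUnion.2 ⟨i, hμ, fun j hj => (hi j hj).le⟩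

lemma Mmod_le_AMmod_of_le_iSup (hp : 0 < p)
    (h : ∀ F : ℕ → Set (FiniteMeasure X), Monotone F → ⋃ i, F i = E →
      Mmod p m E ≤ ⨆ i, Mmod p m (F i)) :
    Mmod p m E ≤ AMmod p m E := by
  refine le_iInf₂ fun ρ hρ => ENNReal.le_of_forall_lt_one_mul_le fun d hd => ?_
  rcases eq_or_ne d 0 with rfl | hd₀
  · simp
  set c := d ^ (1 / p)
  have hc₀ : c ≠ 0 := (ENNReal.rpow_pos (pos_iff_ne_zero.2 hd₀) hd.ne_top).ne'
  have hc₁ : c < 1 := ENNReal.rpow_lt_one hd (by positivity)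
  have hcp : c ^ p = d := by rw [← ENNReal.rpow_mul, one_div_mul_cancel hp.ne', ENNReal.rpow_one]
  calc d * Mmod p m E
      ≤ ⨆ i, c ^ p * Mmod p m (tailLevelSet ρ E c i) := by
        rw [hcp, ← ENNReal.mul_iSup]
        exact mul_le_mul_right
          (h _ (monotone_tailLevelSet ρ E c) (iUnion_tailLevelSet hρ hc₁)) _
    _ ≤ liminf (fun j => ∫⁻ x, ρ j x ^ p ∂m) atTop := by
        rw [liminf_eq_iSup_iInf_of_nat]
        exact iSup_mono fun i => le_iInf₂ fun j hj =>
          rpow_mul_Mmod_le hp.le hc₀ hc₁.ne_top (hρ.1 j) fun μ hμ => hμ.2 j hj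

theorem Mmod_eq_AMmod_iff (hp : 0 < p) :
    Mmod p m E = AMmod p m E ↔
      ∀ F : ℕ → Set (FiniteMeasure X), Monotone F → ⋃ i, F i = E →
        Mmod p m E = ⨆ i, Mmod p m (F i) := by
  refine ⟨fun h F hF hFE => le_antisymm ?_ (iSup_Mmod_le hFE), fun h => ?_⟩
  · exact h.trans_le (AMmod_le_iSup_Mmod hF hFE)
  · exact (Mmod_le_AMmod_of_le_iSup hp fun F hF hFE => (h F hF hFE).le).antisymm AMmod_le_Mmod

end Moduli

theorem stmt11_general {X : Type*} [TopologicalSpace X] [MeasurableSpace X]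
    (m : Measure X)
    (E : Set (FiniteMeasure X)) :
    Mmod 1 m E = AMmod 1 m E ↔
      ∀ F : ℕ → Set (FiniteMeasure X), Monotone F → (⋃ i, F i) = E →
        Mmod 1 m E = ⨆ i, Mmod 1 m (F i) :=
  Mmod_eq_AMmod_iff one_pos

theorem stmt11 {X : Type*} [TopologicalSpace X] [PolishSpace X] [MeasurableSpace X] [BorelSpace X]
    (m : Measure X) [IsFiniteMeasureOnCompacts m] [m.InnerRegular]
    (E : Set (FiniteMeasure X)) :
    Mmod 1 m E = AMmod 1 m E ↔
      ∀ F : ℕ → Set (FiniteMeasure X), Monotone F → (⋃ i, F i) = E →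
        Mmod 1 m E = ⨆ i, Mmod 1 m (F i) :=
  stmt11_general m E

end AMPaper

end
end

section
/- Let (G_{m,i})_{m,i∈ℕ} be a system of open subsets of X such that: (a) the sets G_{m,1}, m ∈ ℕ, are pairwise disjoint; (b) G_{m,1} ⊇ G_{m,2} ⊇ G_{m,3} ⊇ … for each m; (c) m(G_{m,i}) > 0 for all m, i; (d) lim_{i→∞} m(G_{m,i}) = 0 for each m; (e) m(∪_m G_{m,1}) < ∞. For each m ∈ ℕ and each sequence s = (s_n)_n of positive integers, set H_{m,s} = ∪_{n≥m} G_{n,s_n} and let μ_{m,s} be the restriction of m to H_{m,s}. Suppose E_0 ⊆ M^+(X) contains all the measures μ_{m,s}. Then there exists an increasing sequence (E_m)_{m≥1} of subsets of E_0 such that AM(∪_m E_m) > lim_{m→∞} AM(E_m). -/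
/-!
Take `E_k` to be the measures `μ_{n,s}` with `n ≤ k`. Each `E_k` has `AM ≤ 1`: the normalised
indicators of `G_{k,j}` are admissible, as every `H_{n,s}` with `n ≤ k` eventually contains
`G_{k,j}`.

For the union, pass to densities `ρ_j m` of mass below `2` along a subsequence. Each column, and
the tail `⋃_{n ≥ R} G_{n,0}`, carries vanishing mass. So if every box `⋃_{M ≤ n < R} G_{n,s_n}`
were frequently of mass `< a < 1`, a diagonal choice of depths would give some `H_{M,σ}` of mass
`< a` infinitely often, against admissibility. Hence beyond any column some box eventually has
mass `≥ a`; two disjoint such boxes give `AM(⋃ E_k) ≥ 2`.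
-/

open MeasureTheory Filter Topology BoundedContinuousFunction ENNReal NNReal

noncomputable section

namespace AMPaper

variable (X : Type*) [TopologicalSpace X] [MeasurableSpace X]

variable {X}

section Stairs

variable {X : Type*} {G : ℕ → ℕ → Set X}

/-- The set `H_{k,s}` of the paper. -/
def stairUnion (G : ℕ → ℕ → Set X) (k : ℕ) (s : ℕ → ℕ) : Set X :=
  ⋃ n ∈ Set.Ici k, G n (s n)

def boxUnion (G : ℕ → ℕ → Set X) (M R : ℕ) (s : ℕ → ℕ) : Set X :=
  ⋃ n ∈ Set.Ico M R, G n (s n)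

lemma subset_stairUnion {k n : ℕ} (hkn : k ≤ n) (s : ℕ → ℕ) : G n (s n) ⊆ stairUnion G k s :=
  Set.subset_biUnion_of_mem (u := fun n => G n (s n)) (Set.mem_Ici.mpr hkn)

lemma subset_boxUnion {M R n : ℕ} (hn : n ∈ Set.Ico M R) (s : ℕ → ℕ) :
    G n (s n) ⊆ boxUnion G M R s :=
  Set.subset_biUnion_of_mem (u := fun n => G n (s n)) hn

lemma stairUnion_antitone (s : ℕ → ℕ) : Antitone fun k => stairUnion G k s :=
  fun _ _ hkl => Set.iUnion₂_subset fun _ hn => subset_stairUnion (hkl.trans hn) s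

lemma stairUnion_subset_of_le (hanti : ∀ n, Antitone (G n)) (k : ℕ) {s s' : ℕ → ℕ}
    (hss' : s ≤ s') : stairUnion G k s' ⊆ stairUnion G k s :=
  Set.iUnion₂_subset fun n hn => (hanti n (hss' n)).trans (subset_stairUnion hn s)

lemma stairUnion_subset_iUnion (hanti : ∀ n, Antitone (G n)) (k : ℕ) (s : ℕ → ℕ) :
    stairUnion G k s ⊆ ⋃ n, G n 0 :=
  Set.iUnion₂_subset fun n _ => (hanti n zero_le).trans (Set.subset_iUnion (G · 0) n)

lemma stairUnion_subset_boxUnion_union (M R : ℕ) (s : ℕ → ℕ) :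
    stairUnion G M s ⊆ boxUnion G M R s ∪ stairUnion G R s := by
  refine Set.iUnion₂_subset fun n hn => ?_
  rcases lt_or_ge n R with hnR | hnR
  · exact Set.subset_union_of_subset_left (subset_boxUnion ⟨hn, hnR⟩ s) _
  · exact Set.subset_union_of_subset_right (subset_stairUnion hnR s) _

lemma boxUnion_subset_union (M R R' : ℕ) (s : ℕ → ℕ) :
    boxUnion G M R' s ⊆ boxUnion G M R s ∪ boxUnion G R R' s := by
  refine Set.iUnion₂_subset fun n hn => ?_
  rcases lt_or_ge n R with hnR | hnR
  · exact Set.subset_union_of_subset_left (subset_boxUnion ⟨hn.1, hnR⟩ s) _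
  · exact Set.subset_union_of_subset_right (subset_boxUnion ⟨hnR, hn.2⟩ s) _

lemma boxUnion_congr {M R : ℕ} {s s' : ℕ → ℕ} (h : ∀ n ∈ Set.Ico M R, s n = s' n) :
    boxUnion G M R s = boxUnion G M R s' :=
  Set.iUnion₂_congr fun n hn => by rw [h n hn]

lemma disjoint_boxUnion (hdisj : Pairwise fun k l => Disjoint (G k 0) (G l 0))
    (hanti : ∀ n, Antitone (G n)) {M₁ R₁ M₂ R₂ : ℕ} (hR₁M₂ : R₁ ≤ M₂) (s₁ s₂ : ℕ → ℕ) :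
    Disjoint (boxUnion G M₁ R₁ s₁) (boxUnion G M₂ R₂ s₂) :=
  Set.disjoint_iUnion₂_left.mpr fun n hn => Set.disjoint_iUnion₂_right.mpr fun n' hn' =>
    (hdisj (hn.2.trans_le (hR₁M₂.trans hn'.1)).ne).mono (hanti n zero_le)
      (hanti n' zero_le)

/-- A point lies in at most one column, so it escapes the tails. -/
lemma iInter_stairUnion_zero (hdisj : Pairwise fun k l => Disjoint (G k 0) (G l 0)) :
    ⋂ R, stairUnion G R 0 = ∅ := by
  refine Set.eq_empty_of_forall_notMem fun x hx => ?_
  simp only [stairUnion, Set.mem_iInter, Set.mem_iUnion, Set.mem_Ici, Pi.zero_apply] at hx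
  obtain ⟨n, -, hxn⟩ := hx 0
  obtain ⟨n', hn', hxn'⟩ := hx (n + 1)
  exact Set.disjoint_left.mp (hdisj (by omega : n ≠ n')) hxn hxn'

end Stairs

lemma exists_forall_eq_of_agree_below {α : Type*} {R : ℕ → ℕ} (hR : StrictMono R)
    {s : ℕ → ℕ → α} (hs : ∀ l, ∀ n < R l, s (l + 1) n = s l n) :
    ∃ σ : ℕ → α, ∀ l, ∀ n < R l, σ n = s l n := by
  have hagree : ∀ l l', l ≤ l' → ∀ n < R l, s l' n = s l n := by
    intro l l' hll'
    induction l', hll' using Nat.le_induction with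
    | base => exact fun _ _ => rfl
    | succ l' hll' ih =>
      exact fun n hn => (hs l' n (hn.trans_le (hR.monotone hll'))).trans (ih n hn)
  refine ⟨fun n => s (n + 1) n, fun l n hn => ?_⟩
  rcases le_total l (n + 1) with hl | hl
  · exact hagree l (n + 1) hl n hn
  · exact (hagree (n + 1) l hl n (Nat.lt_of_succ_le hR.le_apply)).symm

section Measures

variable {X : Type*} [MeasurableSpace X] {G : ℕ → ℕ → Set X}

lemma measurableSet_stairUnion (hmeas : ∀ n i, MeasurableSet (G n i)) (k : ℕ) (s : ℕ → ℕ) :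
    MeasurableSet (stairUnion G k s) :=
  MeasurableSet.biUnion (Set.to_countable _) fun n _ => hmeas n (s n)

lemma measurableSet_boxUnion (hmeas : ∀ n i, MeasurableSet (G n i)) (M R : ℕ) (s : ℕ → ℕ) :
    MeasurableSet (boxUnion G M R s) :=
  MeasurableSet.biUnion (Set.to_countable _) fun n _ => hmeas n (s n)

lemma tendsto_measure_of_absolutelyContinuous {m ν : Measure X} [IsFiniteMeasure ν] (hνm : ν ≪ m)
    {U : ℕ → Set X} (hU : ∀ i, MeasurableSet (U i)) (hanti : Antitone U)
    (hm : Tendsto (fun i => m (U i)) atTop (𝓝 0)) :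
    Tendsto (fun i => ν (U i)) atTop (𝓝 0) := by
  have hm0 : m (⋂ i, U i) = 0 :=
    le_antisymm (ge_of_tendsto' hm fun i => measure_mono (Set.iInter_subset _ i)) zero_le
  simpa [Function.comp_def, hνm hm0] using
    tendsto_measure_iInter_atTop (fun i => (hU i).nullMeasurableSet) hanti ⟨0, measure_ne_top ν _⟩

lemma tendsto_measure_stairUnion_zero {ν : Measure X} [IsFiniteMeasure ν]
    (hmeas : ∀ n i, MeasurableSet (G n i))
    (hdisj : Pairwise fun k l => Disjoint (G k 0) (G l 0)) :
    Tendsto (fun R => ν (stairUnion G R 0)) atTop (𝓝 0) := by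
  simpa [Function.comp_def, iInter_stairUnion_zero hdisj] using
    tendsto_measure_iInter_atTop (fun R => (measurableSet_stairUnion hmeas R 0).nullMeasurableSet)
      (stairUnion_antitone 0) ⟨0, measure_ne_top ν _⟩

/-- First push the tail beyond `R'` below the slack, then go deep enough in the finitely many
new columns `[R, R')`. -/
lemma exists_extend_boxUnion {ν : Measure X}
    (hcol : ∀ n, Tendsto (fun i => ν (G n i)) atTop (𝓝 0))
    (htail : Tendsto (fun R => ν (stairUnion G R 0)) atTop (𝓝 0))
    {M R : ℕ} {s : ℕ → ℕ} {a : ℝ≥0∞} (hlt : ν (boxUnion G M R s) < a) :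
    ∃ R' > R, ∃ s' : ℕ → ℕ, (∀ n < R, s' n = s n) ∧
      ν (boxUnion G M R' s') + ν (stairUnion G R' 0) < a := by
  obtain ⟨R', hR'a, hRR'⟩ : ∃ R', ν (boxUnion G M R s) + ν (stairUnion G R' 0) < a ∧ R < R' :=
    (((htail.const_add _).eventually_lt_const (by simpa using hlt)).and
      (eventually_gt_atTop R)).exists
  have hdeep : Tendsto (fun i => ν (boxUnion G R R' fun _ => i)) atTop (𝓝 0) := by
    refine tendsto_of_tendsto_of_tendsto_of_le_of_le tendsto_const_nhds
      (g := fun _ => 0) (h := fun i => ∑ n ∈ Finset.Ico R R', ν (G n i)) ?_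
      (fun _ => zero_le) fun i => ?_
    · simpa using tendsto_finsetSum (Finset.Ico R R') fun n _ => hcol n
    · simpa [boxUnion, ← Finset.coe_Ico] using
        measure_biUnion_finset_le (Finset.Ico R R') fun n => G n i
  obtain ⟨i, hi⟩ := (((hdeep.const_add _).add_const _).eventually_lt_const
    (by simpa using hR'a)).exists
  set s' : ℕ → ℕ := fun n => if n < R then s n else i
  have hlow : boxUnion G M R s' = boxUnion G M R s := boxUnion_congr fun n hn => if_pos hn.2
  have hmid : boxUnion G R R' s' = boxUnion G R R' fun _ => i :=
    boxUnion_congr fun n hn => if_neg (not_lt.mpr hn.1)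
  refine ⟨R', hRR', s', fun n hn => if_pos hn, ?_⟩
  calc ν (boxUnion G M R' s') + ν (stairUnion G R' 0)
      ≤ ν (boxUnion G M R s') + ν (boxUnion G R R' s') + ν (stairUnion G R' 0) := by
        gcongr
        exact (measure_mono (boxUnion_subset_union M R R' s')).trans (measure_union_le _ _)
    _ < a := by rwa [hlow, hmid]

variable {ν : ℕ → Measure X}

lemma exists_frequently_measure_stairUnion_lt (hanti : ∀ n, Antitone (G n))
    (hcol : ∀ t n, Tendsto (fun i => ν t (G n i)) atTop (𝓝 0))
    (htail : ∀ t, Tendsto (fun R => ν t (stairUnion G R 0)) atTop (𝓝 0))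
    {M : ℕ} {a : ℝ≥0∞} (hbox : ∀ R s, ∃ᶠ t in atTop, ν t (boxUnion G M R s) < a) :
    ∃ σ : ℕ → ℕ, ∃ᶠ t in atTop, ν t (stairUnion G M σ) < a := by
  have step : ∀ (T R : ℕ) (s : ℕ → ℕ), ∃ t R' s', T ≤ t ∧ R < R' ∧ (∀ n < R, s' n = s n) ∧
      ν t (boxUnion G M R' s') + ν t (stairUnion G R' 0) < a := by
    intro T R s
    obtain ⟨t, hTt, ht⟩ := frequently_atTop.mp (hbox R s) T
    obtain ⟨R', hRR', s', hs', hlt⟩ := exists_extend_boxUnion (hcol t) (htail t) ht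
    exact ⟨t, R', s', hTt, hRR', hs', hlt⟩
  choose! tf Rf sf hTt hRR' hs' hlt using step
  -- Stage `l` freezes the depths below `R l`; the light time chosen at stage `l` also sees the
  -- final `σ` light, since `σ` agrees with the frozen depths below `R (l + 1)`.
  let state : ℕ → ℕ × (ℕ → ℕ) := fun l =>
    Nat.rec (0, 0) (fun l p => (Rf l p.1 p.2, sf l p.1 p.2)) l
  obtain ⟨σ, hσ⟩ := exists_forall_eq_of_agree_below (R := fun l => (state l).1)
    (s := fun l => (state l).2) (strictMono_nat_of_lt_succ fun l => hRR' l _ _)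
    fun l n hn => hs' l _ _ n hn
  refine ⟨σ, frequently_atTop.mpr fun T => ⟨tf T (state T).1 (state T).2, hTt _ _ _, ?_⟩⟩
  set t := tf T (state T).1 (state T).2
  set R' := (state (T + 1)).1
  calc ν t (stairUnion G M σ) ≤ ν t (boxUnion G M R' σ) + ν t (stairUnion G R' σ) :=
        (measure_mono (stairUnion_subset_boxUnion_union M R' σ)).trans (measure_union_le _ _)
    _ ≤ ν t (boxUnion G M R' (state (T + 1)).2) + ν t (stairUnion G R' 0) := by
        rw [boxUnion_congr fun n hn => hσ (T + 1) n hn.2]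
        gcongr
        exact stairUnion_subset_of_le hanti R' zero_le
    _ < a := hlt T _ _

lemma two_le_liminf_measure_univ (hmeas : ∀ n i, MeasurableSet (G n i))
    (hdisj : Pairwise fun k l => Disjoint (G k 0) (G l 0)) (hanti : ∀ n, Antitone (G n))
    (hcol : ∀ t n, Tendsto (fun i => ν t (G n i)) atTop (𝓝 0))
    (htail : ∀ t, Tendsto (fun R => ν t (stairUnion G R 0)) atTop (𝓝 0))
    (hstair : ∀ k σ, 1 ≤ liminf (fun t => ν t (stairUnion G k σ)) atTop) :
    2 ≤ liminf (fun t => ν t Set.univ) atTop := by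
  have hbox : ∀ M, ∀ a < 1, ∃ R s, ∀ᶠ t in atTop, a ≤ ν t (boxUnion G M R s) := by
    intro M a ha
    by_contra! h
    obtain ⟨σ, hσ⟩ := exists_frequently_measure_stairUnion_lt hanti hcol htail h
    exact (hstair M σ).not_gt
      ((liminf_le_of_frequently_le' (hσ.mono fun _ => le_of_lt)).trans_lt ha)
  refine le_of_forall_lt_imp_le_of_dense fun c hc => ?_
  have hc2 : c / 2 < 1 := by
    rwa [ENNReal.div_lt_iff (Or.inl two_ne_zero) (Or.inl ENNReal.ofNat_ne_top), one_mul]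
  obtain ⟨R₁, s₁, h₁⟩ := hbox 0 (c / 2) hc2
  obtain ⟨R₂, s₂, h₂⟩ := hbox R₁ (c / 2) hc2
  refine le_liminf_of_le (by isBoundedDefault) ((h₁.and h₂).mono fun t ⟨ht₁, ht₂⟩ => ?_)
  calc c = c / 2 + c / 2 := (ENNReal.add_halves c).symm
    _ ≤ ν t (boxUnion G 0 R₁ s₁) + ν t (boxUnion G R₁ R₂ s₂) := add_le_add ht₁ ht₂
    _ = ν t (boxUnion G 0 R₁ s₁ ∪ boxUnion G R₁ R₂ s₂) :=
        (measure_union (disjoint_boxUnion hdisj hanti le_rfl s₁ s₂)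
          (measurableSet_boxUnion hmeas R₁ R₂ s₂)).symm
    _ ≤ ν t Set.univ := measure_mono (Set.subset_univ _)

def stairFamily (m : Measure X) (G : ℕ → ℕ → Set X) (k : ℕ) : Set (FiniteMeasure X) :=
  {μ | ∃ n ≤ k, ∃ s, (μ : Measure X) = m.restrict (stairUnion G n s)}

lemma stairFamily_mono (m : Measure X) (G : ℕ → ℕ → Set X) : Monotone (stairFamily m G) :=
  fun _ _ hkl _ ⟨n, hn, s, hs⟩ => ⟨n, hn.trans hkl, s, hs⟩

end Measures

section Modulus

variable {X : Type*} [TopologicalSpace X] [MeasurableSpace X] {G : ℕ → ℕ → Set X}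

lemma AMmod_one_le_one_of_eventually_le [OpensMeasurableSpace X] {m : Measure X}
    {E : Set (FiniteMeasure X)} {U : ℕ → Set X} (hU : ∀ j, IsOpen (U j))
    (hpos : ∀ j, m (U j) ≠ 0) (hfin : ∀ j, m (U j) ≠ ∞)
    (hE : ∀ μ ∈ E, ∀ᶠ j in atTop, m (U j) ≤ (μ : Measure X) (U j)) :
    AMmod 1 m E ≤ 1 := by
  set ρ : ℕ → X → ℝ≥0∞ := fun j => (U j).indicator fun _ => (m (U j))⁻¹
  have hint : ∀ (μ : Measure X) j, ∫⁻ x, ρ j x ∂μ = (m (U j))⁻¹ * μ (U j) := fun μ j => by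
    rw [lintegral_indicator (hU j).measurableSet, setLIntegral_const]
  have hadm : AdmissibleSeq ρ E := by
    refine ⟨fun j => (hU j).lowerSemicontinuous_indicator zero_le, fun μ hμ => ?_⟩
    refine le_liminf_of_le (by isBoundedDefault) ((hE μ hμ).mono fun j hj => ?_)
    rw [hint, ← ENNReal.inv_mul_cancel (hpos j) (hfin j)]
    gcongr
  calc AMmod 1 m E ≤ liminf (fun j => ∫⁻ x, ρ j x ^ (1 : ℝ) ∂m) atTop := iInf₂_le ρ hadm
    _ = 1 := by simp [hint, ENNReal.inv_mul_cancel (hpos _) (hfin _)]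

lemma AMmod_stairFamily_le_one [OpensMeasurableSpace X] (m : Measure X)
    (hopen : ∀ k i, IsOpen (G k i)) (hanti : ∀ k, Antitone (G k)) (hpos : ∀ k i, 0 < m (G k i))
    (hfin : m (⋃ k, G k 0) < ∞) (k : ℕ) :
    AMmod 1 m (stairFamily m G k) ≤ 1 := by
  refine AMmod_one_le_one_of_eventually_le (hopen k) (fun j => (hpos k j).ne')
    (fun j => ((measure_mono ((hanti k zero_le).trans (Set.subset_iUnion (G · 0) k))).trans_lt
      hfin).ne) ?_
  rintro μ ⟨n, hnk, s, hμ⟩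
  filter_upwards [eventually_ge_atTop (s k)] with j hj
  rw [hμ, Measure.restrict_apply (hopen k j).measurableSet,
    Set.inter_eq_left.mpr ((hanti k hj).trans (subset_stairUnion hnk s))]

lemma two_le_AMmod_iUnion_stairFamily {m : Measure X} (hmeas : ∀ k i, MeasurableSet (G k i))
    (hdisj : Pairwise fun k l => Disjoint (G k 0) (G l 0)) (hanti : ∀ k, Antitone (G k))
    (hlim : ∀ k, Tendsto (fun i => m (G k i)) atTop (𝓝 0)) (hfin : m (⋃ k, G k 0) < ∞) :
    2 ≤ AMmod 1 m (⋃ k, stairFamily m G k) := by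
  refine le_iInf₂ fun ρ hρ => ?_
  simp only [ENNReal.rpow_one]
  by_contra! hlt
  obtain ⟨b, hLb, hb2⟩ := exists_between hlt
  obtain ⟨φ, hφ, hφb⟩ :=
    extraction_of_frequently_atTop (frequently_lt_of_liminf_lt (by isBoundedDefault) hLb)
  set ν : ℕ → Measure X := fun t => m.withDensity (ρ (φ t))
  have hνuniv : ∀ t, ν t Set.univ < b := fun t => by simpa [ν] using hφb t
  have hνfin : ∀ t, IsFiniteMeasure (ν t) :=
    fun t => ⟨(hνuniv t).trans (hb2.trans_le le_top)⟩
  have hstair : ∀ k σ, 1 ≤ liminf (fun t => ν t (stairUnion G k σ)) atTop := by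
    intro k σ
    have hH : m (stairUnion G k σ) ≠ ∞ :=
      ((measure_mono (stairUnion_subset_iUnion hanti k σ)).trans_lt hfin).ne
    let μ : FiniteMeasure X := ⟨m.restrict (stairUnion G k σ), isFiniteMeasure_restrict.mpr hH⟩
    calc 1 ≤ liminf (fun j => ∫⁻ x, ρ j x ∂(μ : Measure X)) atTop :=
          hρ.2 μ (Set.mem_iUnion.mpr ⟨k, k, le_rfl, σ, rfl⟩)
      _ ≤ liminf (fun t => ∫⁻ x, ρ (φ t) x ∂(μ : Measure X)) atTop :=
          hφ.tendsto_atTop.liminf_le_liminf_comp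
      _ = liminf (fun t => ν t (stairUnion G k σ)) atTop := by
          simp [ν, μ, withDensity_apply _ (measurableSet_stairUnion hmeas k σ)]
  refine ((two_le_liminf_measure_univ hmeas hdisj hanti
    (fun t n => tendsto_measure_of_absolutelyContinuous (withDensity_absolutelyContinuous _ _)
      (hmeas n) (hanti n) (hlim n))
    (fun t => tendsto_measure_stairUnion_zero hmeas hdisj) hstair).trans
    (liminf_le_of_frequently_le' (Frequently.of_forall fun t => (hνuniv t).le))).not_gt hb2

end Modulus

theorem stmt12_general {X : Type*} [TopologicalSpace X] [MeasurableSpace X] [BorelSpace X]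
    (m : Measure X)
    (G : ℕ → ℕ → Set X) (hopen : ∀ k i, IsOpen (G k i))
    (hdisj : Pairwise fun k l => Disjoint (G k 0) (G l 0))
    (hanti : ∀ k, Antitone (G k))
    (hpos : ∀ k i, 0 < m (G k i))
    (hlim : ∀ k, Tendsto (fun i => m (G k i)) atTop (𝓝 0))
    (hfin : m (⋃ k, G k 0) < ∞)
    (E₀ : Set (FiniteMeasure X))
    (hE₀ : ∀ (k : ℕ) (s : ℕ → ℕ) (μ : FiniteMeasure X),
      (μ : Measure X) = m.restrict (⋃ n ∈ Set.Ici k, G n (s n)) → μ ∈ E₀) :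
    ∃ E : ℕ → Set (FiniteMeasure X), Monotone E ∧ (∀ k, E k ⊆ E₀) ∧
      (⨆ k, AMmod 1 m (E k)) < AMmod 1 m (⋃ k, E k) := by
  refine ⟨stairFamily m G, stairFamily_mono m G,
    fun k μ ⟨n, _, s, hμ⟩ => hE₀ n s μ hμ, ?_⟩
  calc ⨆ k, AMmod 1 m (stairFamily m G k)
      ≤ 1 := iSup_le (AMmod_stairFamily_le_one m hopen hanti hpos hfin)
    _ < 2 := one_lt_two
    _ ≤ AMmod 1 m (⋃ k, stairFamily m G k) :=
        two_le_AMmod_iUnion_stairFamily (fun k i => (hopen k i).measurableSet) hdisj hanti hlim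
          hfin

theorem stmt12 {X : Type*} [TopologicalSpace X] [PolishSpace X] [MeasurableSpace X] [BorelSpace X]
    (m : Measure X) [IsFiniteMeasureOnCompacts m] [m.InnerRegular]
    (G : ℕ → ℕ → Set X) (hopen : ∀ k i, IsOpen (G k i))
    (hdisj : Pairwise fun k l => Disjoint (G k 0) (G l 0))
    (hanti : ∀ k, Antitone (G k))
    (hpos : ∀ k i, 0 < m (G k i))
    (hlim : ∀ k, Tendsto (fun i => m (G k i)) atTop (𝓝 0))
    (hfin : m (⋃ k, G k 0) < ∞)
    (E₀ : Set (FiniteMeasure X))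
    (hE₀ : ∀ (k : ℕ) (s : ℕ → ℕ) (μ : FiniteMeasure X),
      (μ : Measure X) = m.restrict (⋃ n ∈ Set.Ici k, G n (s n)) → μ ∈ E₀) :
    ∃ E : ℕ → Set (FiniteMeasure X), Monotone E ∧ (∀ k, E k ⊆ E₀) ∧
      (⨆ k, AMmod 1 m (E k)) < AMmod 1 m (⋃ k, E k) :=
  stmt12_general m G hopen hdisj hanti hpos hlim hfin E₀ hE₀

end AMPaper

end
end

section
/- Let X = ℝ with m the Lebesgue measure, and let Γ = { m restricted to [0,ℓ] : ℓ ∈ (0,1] } ⊆ M^+(ℝ). Then AM(Γ) ≤ 1, while every τ_b-open set G ⊆ M^+(ℝ) with Γ ⊆ G satisfies AM(G) ≥ 2. Consequently, AM is not outer regular with respect to τ_b-open (and hence τ_A-open) sets. -/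
open MeasureTheory Filter Topology BoundedContinuousFunction ENNReal NNReal

noncomputable section

namespace AMPaper

variable (X : Type*) [TopologicalSpace X] [MeasurableSpace X]

variable {X}

/-!
The spikes `(j + 1) · 1_{(0, 1/(j+1))}` have unit Lebesgue mass, and each measure of `Γ` gives
them mass `1` as soon as `1/(j+1) ≤ ℓ`; hence `AM(Γ) ≤ 1`. On the other hand `t ↦ m|[t, t+1]` is
`τ_b`-continuous, so a `τ_b`-open `G ⊇ Γ` contains `m|[η, 1+η]` for some `η > 0`. Together with
`m|[0, ℓ]`, `ℓ < η`, this gives two measures of `G` whose sum is at most `m`, and superadditivity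
of `liminf` forces `liminf_j ∫ ρ_j dm ≥ 2` for every admissible sequence of `G`.
-/

theorem _root_.ENNReal.le_liminf_add (u v : ℕ → ℝ≥0∞) :
    liminf u atTop + liminf v atTop ≤ liminf (u + v) atTop := by
  have hmono : ∀ w : ℕ → ℝ≥0∞, Monotone fun n => ⨅ i ≥ n, w i := fun w _ _ hnk =>
    le_iInf₂ fun i hi => iInf₂_le i (hnk.trans hi)
  simp only [liminf_eq_iSup_iInf_of_nat]
  rw [ENNReal.iSup_add_iSup_of_monotone (hmono u) (hmono v)]
  exact iSup_mono fun n => le_iInf₂ fun i hi => add_le_add (iInf₂_le i hi) (iInf₂_le i hi)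

section Modulus

variable {X : Type*} [TopologicalSpace X] [MeasurableSpace X]

theorem continuous_taub_iff {Y : Type*} [TopologicalSpace Y] {f : Y → FiniteMeasure X} :
    Continuous[_, taub X] f ↔ ∀ g : X →ᵇ ℝ, Continuous fun y => ∫ x, g x ∂(f y : Measure X) := by
  rw [taub, continuous_iInf_rng]
  simp only [continuous_induced_rng, Function.comp_def]

theorem two_le_AMmod_one_of_add_le {m : Measure X} {E : Set (FiniteMeasure X)}
    {μ ν : FiniteMeasure X} (hμ : μ ∈ E) (hν : ν ∈ E) (hle : (μ : Measure X) + ν ≤ m) :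
    2 ≤ AMmod 1 m E := by
  refine le_iInf₂ fun ρ hρ => ?_
  calc (2 : ℝ≥0∞) = 1 + 1 := one_add_one_eq_two.symm
    _ ≤ liminf (fun j => ∫⁻ x, ρ j x ∂(μ : Measure X)) atTop
          + liminf (fun j => ∫⁻ x, ρ j x ∂(ν : Measure X)) atTop :=
        add_le_add (hρ.2 μ hμ) (hρ.2 ν hν)
    _ ≤ liminf (fun j => ∫⁻ x, ρ j x ∂((μ : Measure X) + (ν : Measure X))) atTop := by
        simp only [lintegral_add_measure]
        exact ENNReal.le_liminf_add _ _
    _ ≤ liminf (fun j => ∫⁻ x, ρ j x ^ (1 : ℝ) ∂m) atTop := by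
        simp only [ENNReal.rpow_one]
        exact liminf_le_liminf (.of_forall fun j => lintegral_mono' hle le_rfl)

end Modulus

def spike (j : ℕ) : ℝ → ℝ≥0∞ :=
  (Set.Ioo 0 ((j : ℝ) + 1)⁻¹).indicator fun _ => (j : ℝ≥0∞) + 1

theorem lowerSemicontinuous_spike (j : ℕ) : LowerSemicontinuous (spike j) :=
  isOpen_Ioo.lowerSemicontinuous_indicator zero_le

theorem lintegral_spike (j : ℕ) (μ : Measure ℝ) :
    ∫⁻ x, spike j x ∂μ = ((j : ℝ≥0∞) + 1) * μ (Set.Ioo 0 ((j : ℝ) + 1)⁻¹) :=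
  lintegral_indicator_const measurableSet_Ioo _

theorem natCast_add_one_mul_volume_Ioo (j : ℕ) :
    ((j : ℝ≥0∞) + 1) * volume (Set.Ioo (0 : ℝ) ((j : ℝ) + 1)⁻¹) = 1 := by
  rw [Real.volume_Ioo, sub_zero, ENNReal.ofReal_inv_of_pos (by positivity)]
  exact_mod_cast ENNReal.mul_inv_cancel (by simp) (by simp)

theorem lintegral_spike_volume (j : ℕ) : ∫⁻ x, spike j x ∂volume = 1 := by
  rw [lintegral_spike, natCast_add_one_mul_volume_Ioo]

theorem admissibleSeq_spike {E : Set (FiniteMeasure ℝ)}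
    (hE : ∀ μ ∈ E, ∃ ℓ > 0, volume.restrict (Set.Ioo 0 ℓ) ≤ (μ : Measure ℝ)) :
    AdmissibleSeq spike E := by
  refine ⟨lowerSemicontinuous_spike, fun μ hμ => ?_⟩
  obtain ⟨ℓ, hℓ, hle⟩ := hE μ hμ
  obtain ⟨N, hN⟩ := exists_nat_gt ℓ⁻¹
  refine le_liminf_of_le (by isBoundedDefault) ?_
  filter_upwards [eventually_ge_atTop N] with j hj
  have hjℓ : ((j : ℝ) + 1)⁻¹ ≤ ℓ := by
    rw [inv_le_comm₀ (by positivity) hℓ]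
    linarith [(Nat.cast_le (α := ℝ)).2 hj]
  calc (1 : ℝ≥0∞)
        = ((j : ℝ≥0∞) + 1) * volume.restrict (Set.Ioo 0 ℓ) (Set.Ioo 0 ((j : ℝ) + 1)⁻¹) := by
        rw [Measure.restrict_apply measurableSet_Ioo,
          Set.inter_eq_left.2 (Set.Ioo_subset_Ioo_right hjℓ), natCast_add_one_mul_volume_Ioo]
    _ ≤ _ := by rw [lintegral_spike]; gcongr

theorem AMmod_one_le_one {E : Set (FiniteMeasure ℝ)}
    (hE : ∀ μ ∈ E, ∃ ℓ > 0, volume.restrict (Set.Ioo 0 ℓ) ≤ (μ : Measure ℝ)) :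
    AMmod 1 volume E ≤ 1 :=
  (iInf₂_le spike (admissibleSeq_spike hE)).trans_eq <| by
    simp only [ENNReal.rpow_one, lintegral_spike_volume, liminf_const]

def volumeIcc (a b : ℝ) : FiniteMeasure ℝ :=
  ⟨volume.restrict (Set.Icc a b), inferInstance⟩

theorem integral_volumeIcc (g : ℝ →ᵇ ℝ) {a b : ℝ} (hab : a ≤ b) :
    ∫ x, g x ∂(volumeIcc a b : Measure ℝ) = (∫ x in (0)..b, g x) - ∫ x in (0)..a, g x := by
  have hint : ∀ a b : ℝ, IntervalIntegrable g volume a b := g.continuous.intervalIntegrable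
  rw [intervalIntegral.integral_interval_sub_left (hint 0 b) (hint 0 a),
    intervalIntegral.integral_of_le hab]
  exact integral_Icc_eq_integral_Ioc

theorem continuous_volumeIcc {Y : Type*} [TopologicalSpace Y] {a b : Y → ℝ}
    (ha : Continuous a) (hb : Continuous b) (hab : ∀ y, a y ≤ b y) :
    Continuous[_, taub ℝ] fun y => volumeIcc (a y) (b y) := by
  refine continuous_taub_iff.2 fun g => ?_
  have hF := intervalIntegral.continuous_primitive
    (fun a b => g.continuous.intervalIntegrable (μ := volume) a b) 0
  simp only [integral_volumeIcc g (hab _)]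
  exact (hF.comp hb).sub (hF.comp ha)

theorem volumeIcc_add_volumeIcc_le {a b c d : ℝ} (hbc : b < c) :
    (volumeIcc a b : Measure ℝ) + (volumeIcc c d : Measure ℝ) ≤ volume := by
  have hdisj : Disjoint (Set.Icc a b) (Set.Icc c d) :=
    Set.disjoint_left.2 fun x hx hx' => (hx.2.trans_lt hbc).not_ge hx'.1
  rw [volumeIcc, volumeIcc, FiniteMeasure.toMeasure_mk, FiniteMeasure.toMeasure_mk,
    ← Measure.restrict_union hdisj measurableSet_Icc]
  exact Measure.restrict_le_self

theorem exists_pos_volumeIcc_add_one_mem {G : Set (FiniteMeasure ℝ)} (hG : IsOpen[taub ℝ] G)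
    (h₀ : volumeIcc 0 1 ∈ G) : ∃ η > 0, volumeIcc η (η + 1) ∈ G := by
  have hcont : Continuous[_, taub ℝ] fun t : ℝ => volumeIcc t (t + 1) :=
    continuous_volumeIcc continuous_id (continuous_add_const 1) fun t => by linarith
  have hpre : IsOpen ((fun t : ℝ => volumeIcc t (t + 1)) ⁻¹' G) :=
    @Continuous.isOpen_preimage _ _ _ (taub ℝ) _ hcont G hG
  have hnhds : ∀ᶠ t in 𝓝[>] (0 : ℝ), volumeIcc t (t + 1) ∈ G :=
    nhdsWithin_le_nhds <| hpre.mem_nhds (by simpa using h₀)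
  obtain ⟨η, hη, hηpos⟩ := (hnhds.and self_mem_nhdsWithin).exists
  exact ⟨η, hηpos, hη⟩

/-- The family `Γ`. -/
def initialSegmentMeasures : Set (FiniteMeasure ℝ) :=
  {μ | ∃ ℓ ∈ Set.Ioc (0 : ℝ) 1, (μ : Measure ℝ) = volume.restrict (Set.Icc 0 ℓ)}

theorem AMmod_one_initialSegmentMeasures_le_one : AMmod 1 volume initialSegmentMeasures ≤ 1 :=
  AMmod_one_le_one fun _ ⟨ℓ, hℓ, hμ⟩ =>
    ⟨ℓ, hℓ.1, hμ ▸ Measure.restrict_mono Set.Ioo_subset_Icc_self le_rfl⟩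

theorem two_le_AMmod_one_of_isOpen {G : Set (FiniteMeasure ℝ)} (hG : IsOpen[taub ℝ] G)
    (hΓG : initialSegmentMeasures ⊆ G) : 2 ≤ AMmod 1 volume G := by
  obtain ⟨η, hη, hηG⟩ := exists_pos_volumeIcc_add_one_mem hG (hΓG ⟨1, ⟨one_pos, le_rfl⟩, rfl⟩)
  set ℓ := min (η / 2) 1
  have hℓη : ℓ < η := (min_le_left _ _).trans_lt (half_lt_self hη)
  have hℓΓ : volumeIcc 0 ℓ ∈ initialSegmentMeasures :=
    ⟨ℓ, ⟨lt_min (half_pos hη) one_pos, min_le_right _ _⟩, rfl⟩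
  exact two_le_AMmod_one_of_add_le (hΓG hℓΓ) hηG (volumeIcc_add_volumeIcc_le hℓη)

theorem stmt14 :
    AMmod 1 (volume : Measure ℝ)
        {μ : FiniteMeasure ℝ | ∃ ℓ ∈ Set.Ioc (0:ℝ) 1,
          (μ : Measure ℝ) = volume.restrict (Set.Icc 0 ℓ)} ≤ 1 ∧
    (∀ G : Set (FiniteMeasure ℝ), (taub ℝ).IsOpen G →
      {μ : FiniteMeasure ℝ | ∃ ℓ ∈ Set.Ioc (0:ℝ) 1,
        (μ : Measure ℝ) = volume.restrict (Set.Icc 0 ℓ)} ⊆ G →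
      2 ≤ AMmod 1 (volume : Measure ℝ) G) ∧
    AMmod 1 (volume : Measure ℝ)
        {μ : FiniteMeasure ℝ | ∃ ℓ ∈ Set.Ioc (0:ℝ) 1,
          (μ : Measure ℝ) = volume.restrict (Set.Icc 0 ℓ)} <
      ⨅ (G : Set (FiniteMeasure ℝ)) (_ : (taub ℝ).IsOpen G ∧
        {μ : FiniteMeasure ℝ | ∃ ℓ ∈ Set.Ioc (0:ℝ) 1,
          (μ : Measure ℝ) = volume.restrict (Set.Icc 0 ℓ)} ⊆ G),
        AMmod 1 (volume : Measure ℝ) G := by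
  have hlower : ∀ G, IsOpen[taub ℝ] G → initialSegmentMeasures ⊆ G → 2 ≤ AMmod 1 volume G :=
    fun _ => two_le_AMmod_one_of_isOpen
  refine ⟨AMmod_one_initialSegmentMeasures_le_one, hlower, ?_⟩
  calc AMmod 1 volume initialSegmentMeasures ≤ 1 := AMmod_one_initialSegmentMeasures_le_one
    _ < 2 := one_lt_two
    _ ≤ _ := le_iInf₂ fun G hG => hlower G hG.1 hG.2

end AMPaper

end
end

section
/- Let p ∈ [1,∞). If E_1 ⊆ E_2 ⊆ … is an increasing sequence of subsets of M^+(X) and E = ∪_j E_j, then Ct_p(E) = lim_{j→∞} Ct_p(E_j). -/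
open MeasureTheory Filter Topology BoundedContinuousFunction ENNReal NNReal

noncomputable section

namespace AMPaper

variable (X : Type*) [TopologicalSpace X] [MeasurableSpace X]

variable {X}

theorem stmt17 {X : Type*} [TopologicalSpace X] [PolishSpace X] [MeasurableSpace X] [BorelSpace X]
    (m : Measure X) [IsFiniteMeasureOnCompacts m] [m.InnerRegular]
    (p q : ℝ≥0∞) (hp : 1 ≤ p) (hp' : p ≠ ∞) (hpq : 1/p + 1/q = 1)
    (E : ℕ → Set (FiniteMeasure X)) (hmono : Monotone E) :
    Ct X q m (⋃ j, E j) = ⨆ j, Ct X q m (E j) := by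
  unfold Ct
  apply le_antisymm
  · refine iSup_le fun η => iSup_le fun hη => ?_
    rw [hmono.measure_iUnion]
    exact iSup_le fun j => le_iSup_of_le j (le_iSup_of_le η (le_iSup_of_le hη le_rfl))
  · refine iSup_le fun j => iSup_le fun η => iSup_le fun hη => ?_
    exact le_iSup_of_le η (le_iSup_of_le hη (measure_mono (Set.subset_iUnion E j)))

end AMPaper

end
end

section
/- Let E ⊆ M^+(X) be a Borel set (with respect to τ_b). Then Ct(E) ≤ AM(E). -/
/-!
If the barycenter of a plan `η` has density at most `1`, then `η.bind (↑) ≤ m`. Integrating the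
admissibility of `(ρ_j)` over `E` against `η` and applying Fatou's lemma gives
`η E ≤ ∫ liminf_j ∫ ρ_j dμ dη ≤ liminf_j ∫ ρ_j d(η.bind (↑)) ≤ liminf_j ∫ ρ_j dm`.
The one point needing the topology is that `μ ↦ μ B` is `τ_b`-Borel measurable: for closed `B`
the indicator of `B` is a pointwise limit of bounded continuous functions, and closed sets form
a π-system generating the Borel sets of `X`.
-/

open MeasureTheory Filter Topology BoundedContinuousFunction ENNReal NNReal

noncomputable section

namespace AMPaper

variable (X : Type*) [TopologicalSpace X] [MeasurableSpace X]

variable {X}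

section TaubMeasurability

variable {X : Type*} [TopologicalSpace X] [MeasurableSpace X]

lemma continuous_integral_taub (g : X →ᵇ ℝ) :
    Continuous[taub X, inferInstance] fun μ : FiniteMeasure X => ∫ x, g x ∂(μ : Measure X) :=
  continuous_iInf_dom continuous_induced_dom

lemma measurable_lintegral_taub [OpensMeasurableSpace X] (g : X →ᵇ ℝ≥0) :
    Measurable[@borel (FiniteMeasure X) (taub X)]
      fun μ : FiniteMeasure X => ∫⁻ x, g x ∂(μ : Measure X) := by
  let _ := taub X
  borelize (FiniteMeasure X)
  let gℝ : X →ᵇ ℝ := g.comp ((↑) : ℝ≥0 → ℝ) (LipschitzWith.subtype_val _)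
  have hg : ∀ μ : FiniteMeasure X, ∫⁻ x, g x ∂(μ : Measure X)
      = ENNReal.ofReal (∫ x, gℝ x ∂(μ : Measure X)) := fun μ =>
    lintegral_coe_eq_integral _ (integrable_of_nnreal _ g)
  simp_rw [hg]
  exact ENNReal.measurable_ofReal.comp (continuous_integral_taub gℝ).measurable

lemma measurable_measure_of_isClosed_taub [OpensMeasurableSpace X] [HasOuterApproxClosed X]
    {F : Set X} (hF : IsClosed F) :
    Measurable[@borel (FiniteMeasure X) (taub X)]
      fun μ : FiniteMeasure X => (μ : Measure X) F := by
  let _ := taub X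
  borelize (FiniteMeasure X)
  exact measurable_of_tendsto_metrizable
    (fun n => measurable_lintegral_taub (hF.apprSeq n))
    (tendsto_pi_nhds.2 fun μ => HasOuterApproxClosed.tendsto_lintegral_apprSeq hF μ)

lemma measurable_coe_taub [BorelSpace X] [HasOuterApproxClosed X] :
    Measurable[@borel (FiniteMeasure X) (taub X)] fun μ : FiniteMeasure X => (μ : Measure X) := by
  let _ := taub X
  borelize (FiniteMeasure X)
  exact .measure_of_isPiSystem
    (BorelSpace.measurable_eq.trans borel_eq_generateFrom_isClosed) isPiSystem_isClosed
    (fun _ hF => measurable_measure_of_isClosed_taub hF)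
    (measurable_measure_of_isClosed_taub isClosed_univ)

end TaubMeasurability

section Plans

variable {X : Type*} [MeasurableSpace X] {_ : MeasurableSpace (FiniteMeasure X)}
  {η : Measure (FiniteMeasure X)} {m : Measure X}

lemma bind_coe_le_of_essSup_le_one
    (hcoe : Measurable fun μ : FiniteMeasure X => (μ : Measure X)) {f : X → ℝ≥0∞}
    (hbar : ∀ B, MeasurableSet B → ∫⁻ μ, (μ : Measure X) B ∂η = ∫⁻ x in B, f x ∂m)
    (hf : essSup f m ≤ 1) :
    η.bind (fun μ : FiniteMeasure X => (μ : Measure X)) ≤ m := by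
  refine Measure.le_iff.2 fun B hB => ?_
  have hf_ae : ∀ᵐ x ∂m, f x ≤ 1 := (ae_le_essSup f).mono fun _ hx => hx.trans hf
  calc η.bind (fun μ : FiniteMeasure X => (μ : Measure X)) B = ∫⁻ x in B, f x ∂m := by
        rw [Measure.bind_apply hB hcoe.aemeasurable, hbar B hB]
    _ ≤ ∫⁻ _ in B, 1 ∂m := lintegral_mono_ae (ae_restrict_of_ae hf_ae)
    _ = m B := setLIntegral_one B

lemma measure_le_liminf_lintegral_of_admissibleSeq [TopologicalSpace X] [OpensMeasurableSpace X]
    (hcoe : Measurable fun μ : FiniteMeasure X => (μ : Measure X))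
    {E : Set (FiniteMeasure X)} (hE : MeasurableSet E) {ρ : ℕ → X → ℝ≥0∞} (hρ : AdmissibleSeq ρ E)
    (hη : η.bind (fun μ : FiniteMeasure X => (μ : Measure X)) ≤ m) :
    η E ≤ liminf (fun j => ∫⁻ x, ρ j x ∂m) atTop := by
  have hmeas : ∀ j, Measurable fun μ : FiniteMeasure X => ∫⁻ x, ρ j x ∂(μ : Measure X) :=
    fun j => (Measure.measurable_lintegral (hρ.1 j).measurable).comp hcoe
  calc η E = ∫⁻ _ in E, 1 ∂η := (setLIntegral_one E).symm
    _ ≤ ∫⁻ μ in E, liminf (fun j => ∫⁻ x, ρ j x ∂(μ : Measure X)) atTop ∂η :=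
        setLIntegral_mono' hE hρ.2
    _ ≤ ∫⁻ μ, liminf (fun j => ∫⁻ x, ρ j x ∂(μ : Measure X)) atTop ∂η :=
        setLIntegral_le_lintegral E _
    _ ≤ liminf (fun j => ∫⁻ μ, ∫⁻ x, ρ j x ∂(μ : Measure X) ∂η) atTop :=
        lintegral_liminf_le hmeas
    _ = liminf (fun j => ∫⁻ x, ρ j x ∂(η.bind fun μ : FiniteMeasure X => (μ : Measure X)))
          atTop := by
        simp only [Measure.lintegral_bind hcoe.aemeasurable (hρ.1 _).measurable.aemeasurable]
    _ ≤ liminf (fun j => ∫⁻ x, ρ j x ∂m) atTop :=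
        liminf_le_liminf (.of_forall fun _ => lintegral_mono' hη le_rfl)

end Plans

theorem stmt18_general {X : Type*} [TopologicalSpace X] [PolishSpace X] [MeasurableSpace X] [BorelSpace X]
    (m : Measure X)
    (E : Set (FiniteMeasure X))
    (hE : MeasurableSet[@borel (FiniteMeasure X) (taub X)] E) :
    Ct X ∞ m E ≤ AMmod 1 m E := by
  refine iSup₂_le fun η ⟨_, f, _, hbar, hf⟩ => le_iInf₂ fun ρ hρ => ?_
  simp only [ENNReal.rpow_one]
  exact measure_le_liminf_lintegral_of_admissibleSeq measurable_coe_taub hE hρ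
    (bind_coe_le_of_essSup_le_one measurable_coe_taub hbar (by simpa [lqNorm] using hf))

theorem stmt18 {X : Type*} [TopologicalSpace X] [PolishSpace X] [MeasurableSpace X] [BorelSpace X]
    (m : Measure X) [IsFiniteMeasureOnCompacts m] [m.InnerRegular]
    (E : Set (FiniteMeasure X))
    (hE : MeasurableSet[@borel (FiniteMeasure X) (taub X)] E) :
    Ct X ∞ m E ≤ AMmod 1 m E :=
  stmt18_general m E hE

end AMPaper

end
end
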